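/- arXiv:quant-ph/9704044 — 11 statements merged into one kernel-verified Lean document; each statement's English description precedes it below -/
import Mathlib

section
/- Let W be a finite-dimensional real inner product space and L ⊆ W a closed convex cone satisfying: (a) x ∈ L, x ≠ 0, λ < 0 implies λx ∉ L; and (b) W = L + (−L). Suppose the inner product g satisfies: for all l₁, l₂ ∈ L, g(l₁,l₁) ≥ g(l₁+l₂, l₁+l₂) implies l₂ = 0. If C ⊆ L is closed and L-stable (i.e., C = C + L), then C = K(C) + L, where K(C) := { x ∈ C : (x − L) ∩ C = {x} }. -/
open scoped InnerProductSpace Pointwise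

/-- Let `W` be a finite-dimensional real inner product space and
`L ⊆ W` a normal convex cone (closed convex cone with: `x ∈ L`, `x ≠ 0`, `λ < 0`
implies `λ x ∉ L`, and `W = L + (−L)`), whose inner product `g` satisfies:
`l₁, l₂ ∈ L` and `g(l₁,l₁) ≥ g(l₁+l₂,l₁+l₂)` implies `l₂ = 0`.  If `C ⊆ L` is
closed and `L`-stable (`C + L = C`), then `C = K(C) + L`, where
`K(C) = {x ∈ C | (x − L) ∩ C = {x}}`. -/
theorem stmt2 {W : Type*} [NormedAddCommGroup W] [InnerProductSpace ℝ W]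
    [FiniteDimensional ℝ W]
    (L : Set W) (hLclosed : IsClosed L) (hLconvex : Convex ℝ L)
    (hLcone : ∀ x ∈ L, ∀ c : ℝ, 0 ≤ c → c • x ∈ L)
    (hnormal1 : ∀ x ∈ L, x ≠ 0 → ∀ l : ℝ, l < 0 → l • x ∉ L)
    (hnormal2 : ∀ w : W, ∃ a ∈ L, ∃ b ∈ L, w = a - b)
    (hg : ∀ l1 ∈ L, ∀ l2 ∈ L, ⟪l1, l1⟫_ℝ ≥ ⟪l1 + l2, l1 + l2⟫_ℝ → l2 = 0)
    (C : Set W) (hCL : C ⊆ L) (hCclosed : IsClosed C)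
    (hstable : C + L = C) :
    C = {x ∈ C | {y | ∃ l ∈ L, y = x - l} ∩ C = {x}} + L := by
  have h0L : (0:W) ∈ L := by
    obtain ⟨a, ha, b, hb, -⟩ := hnormal2 0
    simpa using hLcone a ha 0 le_rfl
  have haddL : ∀ a ∈ L, ∀ b ∈ L, a + b ∈ L := by
    intro a ha b hb
    have h := hLconvex ha hb (by norm_num : (0:ℝ) ≤ 1/2) (by norm_num : (0:ℝ) ≤ 1/2)
      (by norm_num)
    have h2 := hLcone _ h 2 (by norm_num)
    have : (2:ℝ) • ((1/2:ℝ) • a + (1/2:ℝ) • b) = a + b := by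
      rw [smul_add, smul_smul, smul_smul]; norm_num
    rwa [this] at h2
  have hmono : ∀ l1 ∈ L, ∀ l2 ∈ L, ‖l1‖ ≤ ‖l1 + l2‖ := by
    intro l1 h1 l2 h2
    by_contra h
    push_neg at h
    have hge : ⟪l1, l1⟫_ℝ ≥ ⟪l1 + l2, l1 + l2⟫_ℝ := by
      rw [real_inner_self_eq_norm_sq, real_inner_self_eq_norm_sq]
      nlinarith [norm_nonneg l1, norm_nonneg (l1 + l2)]
    have := hg l1 h1 l2 h2 hge
    simp [this] at h
  apply Set.Subset.antisymm
  · intro x hx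
    set S := {y | ∃ l ∈ L, y = x - l} ∩ C with hSdef
    have hxS : x ∈ S := ⟨⟨0, h0L, by simp⟩, hx⟩
    have hSclosed : IsClosed S := by
      apply IsClosed.inter _ hCclosed
      have hset : {y | ∃ l ∈ L, y = x - l} = (fun y => x - y) ⁻¹' L := by
        ext y
        constructor
        · rintro ⟨l, hl, rfl⟩; simpa using hl
        · intro h; exact ⟨x - y, h, by abel⟩
      rw [hset]
      exact hLclosed.preimage (by continuity)
    have hSbdd : Bornology.IsBounded S := by
      apply Bornology.IsBounded.subset (Metric.isBounded_closedBall (x := (0:W)) (r := ‖x‖))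
      rintro y ⟨⟨l, hl, rfl⟩, hyC⟩
      simp only [Metric.mem_closedBall, dist_zero_right]
      have := hmono (x - l) (hCL hyC) l hl
      simpa using this
    have hScpt : IsCompact S := Metric.isCompact_of_isClosed_isBounded hSclosed hSbdd
    obtain ⟨y, hyS, hymin⟩ := hScpt.exists_isMinOn ⟨x, hxS⟩ continuous_norm.continuousOn
    obtain ⟨⟨l, hlL, hyl⟩, hyC⟩ := hyS
    have hxyL : x - y ∈ L := by rw [hyl]; simpa using hlL
    have hK : {z | ∃ m ∈ L, z = y - m} ∩ C = {y} := by
      ext z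
      constructor
      · rintro ⟨⟨m, hmL, rfl⟩, hzC⟩
        have hzS : y - m ∈ S := by
          refine ⟨⟨(x - y) + m, haddL _ hxyL _ hmL, by abel⟩, hzC⟩
        have hle : ‖y‖ ≤ ‖y - m‖ := hymin hzS
        have hge : ⟪y - m, y - m⟫_ℝ ≥ ⟪(y - m) + m, (y - m) + m⟫_ℝ := by
          rw [real_inner_self_eq_norm_sq, real_inner_self_eq_norm_sq]
          have : (y - m) + m = y := by abel
          rw [this]
          nlinarith [norm_nonneg y, norm_nonneg (y - m)]
        have hm0 := hg (y - m) (hCL hzC) m hmL hge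
        simp [hm0]
      · rintro rfl
        exact ⟨⟨0, h0L, by simp⟩, hyC⟩
    rw [Set.mem_add]
    exact ⟨y, ⟨hyC, hK⟩, x - y, hxyL, by abel⟩
  · rw [show ({x ∈ C | {y | ∃ l ∈ L, y = x - l} ∩ C = {x}} : Set W) + L ⊆ C ↔ _ from Iff.rfl]
    calc {x ∈ C | {y | ∃ l ∈ L, y = x - l} ∩ C = {x}} + L
        ⊆ C + L := Set.add_subset_add (fun x hx => hx.1) subset_rfl
      _ = C := hstable
end

section
/- Let W be a finite-dimensional real inner product space, L a closed convex cone in W, L* its dual cone, and Q : int(L*) → L a continuous map satisfying ⟨f, x⟩ ≥ ⟨f, Q(f)⟩ for all f ∈ int(L*) and x ∈ Im Q. Then for all f ∈ int(L*) and x ∈ Im Q with x ≠ Q(f), the strict inequality ⟨f, x⟩ > ⟨f, Q(f)⟩ holds. -/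
open scoped InnerProductSpace

/-- Let `W` be a finite-dimensional real inner product space, `L` a
closed convex cone, `L*` its dual cone (identified with a subset of `W` via the
inner product), and `Q : int(L*) → L` a continuous map with
`⟪f, x⟫ ≥ ⟪f, Q f⟫` for all `f ∈ int(L*)` and `x ∈ Im Q`.  Then for all
`f ∈ int(L*)` and `x ∈ Im Q` with `x ≠ Q f` the strict inequality
`⟪f, x⟫ > ⟪f, Q f⟫` holds. -/
theorem stmt3 {W : Type*} [NormedAddCommGroup W] [InnerProductSpace ℝ W]
    [FiniteDimensional ℝ W]
    (L : Set W) (hLclosed : IsClosed L) (hLconvex : Convex ℝ L)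
    (hLcone : ∀ x ∈ L, ∀ c : ℝ, 0 ≤ c → c • x ∈ L)
    (Q : W → W)
    (hQcont : ContinuousOn Q (interior {f : W | ∀ x ∈ L, 0 ≤ ⟪f, x⟫_ℝ}))
    (hQmaps : ∀ f ∈ interior {f : W | ∀ x ∈ L, 0 ≤ ⟪f, x⟫_ℝ}, Q f ∈ L)
    (hconic : ∀ f ∈ interior {f : W | ∀ x ∈ L, 0 ≤ ⟪f, x⟫_ℝ},
      ∀ x ∈ Q '' interior {f : W | ∀ x ∈ L, 0 ≤ ⟪f, x⟫_ℝ}, ⟪f, Q f⟫_ℝ ≤ ⟪f, x⟫_ℝ) :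
    ∀ f ∈ interior {f : W | ∀ x ∈ L, 0 ≤ ⟪f, x⟫_ℝ},
      ∀ x ∈ Q '' interior {f : W | ∀ x ∈ L, 0 ≤ ⟪f, x⟫_ℝ},
        x ≠ Q f → ⟪f, Q f⟫_ℝ < ⟪f, x⟫_ℝ := by
  set S := interior {f : W | ∀ x ∈ L, 0 ≤ ⟪f, x⟫_ℝ} with hSdef
  have hSopen : IsOpen S := isOpen_interior
  intro f hf x hx hne
  rcases lt_or_eq_of_le (hconic f hf x hx) with h | heq
  · exact h
  exfalso
  set d := Q f - x with hd
  -- d ≠ 0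
  have hdne : d ≠ 0 := fun h => hne (by
    have : Q f = x := by
      have := sub_eq_zero.mp h
      exact this
    exact this.symm)
  obtain ⟨ε, hε, hball⟩ := Metric.isOpen_iff.mp hSopen f hf
  -- key inequality for small positive t
  have key : ∀ t : ℝ, 0 < t → t * ‖d‖ < ε → ⟪d, Q (f + t • d)⟫_ℝ ≤ ⟪d, x⟫_ℝ := by
    intro t ht htε
    have hg : f + t • d ∈ S := by
      apply hball
      simp only [Metric.mem_ball, dist_eq_norm, add_sub_cancel_left]
      calc ‖t • d‖ = t * ‖d‖ := by
            rw [norm_smul, Real.norm_eq_abs, abs_of_pos ht]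
        _ < ε := htε
    have h1 : ⟪f + t • d, Q (f + t • d)⟫_ℝ ≤ ⟪f + t • d, x⟫_ℝ :=
      hconic _ hg x hx
    have h2 : ⟪f, Q f⟫_ℝ ≤ ⟪f, Q (f + t • d)⟫_ℝ :=
      hconic f hf _ ⟨f + t • d, hg, rfl⟩
    rw [inner_add_left, inner_add_left, real_inner_smul_left, real_inner_smul_left] at h1
    have := heq
    nlinarith [h1, h2]
  -- take the limit t → 0⁺
  have hlim : Filter.Tendsto (fun t : ℝ => ⟪d, Q (f + t • d)⟫_ℝ)
      (nhdsWithin 0 (Set.Ioi 0)) (nhds ⟪d, Q f⟫_ℝ) := by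
    have hQc : ContinuousAt Q f := hQcont.continuousAt (hSopen.mem_nhds hf)
    have h0 : Filter.Tendsto (fun t : ℝ => f + t • d) (nhdsWithin 0 (Set.Ioi 0)) (nhds f) := by
      have : Filter.Tendsto (fun t : ℝ => f + t • d) (nhds 0) (nhds f) := by
        have hc : Continuous fun t : ℝ => f + t • d :=
          continuous_const.add (continuous_id.smul continuous_const)
        simpa using hc.tendsto 0
      exact this.mono_left nhdsWithin_le_nhds
    exact ((continuous_const.inner continuous_id).continuousAt.tendsto.comp
      (hQc.tendsto.comp h0))
  have hev : ∀ᶠ t : ℝ in nhdsWithin 0 (Set.Ioi 0),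
      ⟪d, Q (f + t • d)⟫_ℝ ≤ ⟪d, x⟫_ℝ := by
    have hsm : ∀ᶠ t : ℝ in nhdsWithin 0 (Set.Ioi 0), t * ‖d‖ < ε := by
      have : Filter.Tendsto (fun t : ℝ => t * ‖d‖) (nhdsWithin 0 (Set.Ioi 0)) (nhds 0) := by
        have hc : Continuous fun t : ℝ => t * ‖d‖ := continuous_id.mul continuous_const
        simpa using (hc.tendsto 0).mono_left nhdsWithin_le_nhds
      exact this.eventually_lt_const hε
    filter_upwards [hsm, self_mem_nhdsWithin] with t h1 h2
    exact key t h2 h1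
  have hfin : ⟪d, Q f⟫_ℝ ≤ ⟪d, x⟫_ℝ :=
    le_of_tendsto hlim hev
  have : ⟪d, d⟫_ℝ ≤ 0 := by
    have : ⟪d, d⟫_ℝ = ⟪d, Q f⟫_ℝ - ⟪d, x⟫_ℝ := by
      rw [hd, inner_sub_right]
    linarith
  exact hdne (by
    have := real_inner_self_nonpos.mp this
    exact this)
end

section
/- Let W be a finite-dimensional real inner product space with L a closed convex cone, C ⊆ L an L-stable convex set with Im Q ⊆ C, and Q : int(L*) → L a quasi-conic continuous map. If ⟨f, x⟩ ≥ ⟨f, Q(f)⟩ for all f ∈ int(L*) and all x ∈ C, then for all f ∈ int(L*) and x ∈ C with x ≠ Q(f) one has strict inequality ⟨f, x⟩ > ⟨f, Q(f)⟩. -/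
open scoped InnerProductSpace Pointwise
open Filter Topology

/-! If `x` minimises `⟪f, ·⟫` over `C` as well as `Q f` does, move `f` to
`g = f - t • (x - Q f)`. Comparing `x`, a minimiser for `f`, with `Q g`, a minimiser for `g`,
gives `⟪x - Q f, x - Q g⟫ ≤ 0` for small `t > 0`, and letting `t → 0` along the continuous
map `Q` yields `‖x - Q f‖² ≤ 0`. -/

section

variable {W : Type*} [NormedAddCommGroup W] [InnerProductSpace ℝ W]

theorem inner_sub_sub_nonpos_of_le_of_le {f g x y : W} (hf : ⟪f, x⟫_ℝ ≤ ⟪f, y⟫_ℝ)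
    (hg : ⟪g, y⟫_ℝ ≤ ⟪g, x⟫_ℝ) : ⟪f - g, x - y⟫_ℝ ≤ 0 := by
  simp only [inner_sub_left, inner_sub_right]
  linarith

theorem eq_of_inner_le_of_forall_inner_le {S C : Set W} {Q : W → W} (hS : IsOpen S)
    (hQcont : ContinuousOn Q S) (hImQ : Q '' S ⊆ C)
    (hmin : ∀ f ∈ S, ∀ x ∈ C, ⟪f, Q f⟫_ℝ ≤ ⟪f, x⟫_ℝ)
    {f x : W} (hf : f ∈ S) (hx : x ∈ C) (hle : ⟪f, x⟫_ℝ ≤ ⟪f, Q f⟫_ℝ) : x = Q f := by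
  set d := x - Q f
  have hpath : Continuous fun t : ℝ => f - t • d := by fun_prop
  have hcont : ContinuousAt (fun t : ℝ => ⟪d, x - Q (f - t • d)⟫_ℝ) 0 := by
    have hQf : ContinuousAt Q (f - (0 : ℝ) • d) := by
      simpa using hQcont.continuousAt (hS.mem_nhds hf)
    have hQpath : ContinuousAt (fun t : ℝ => Q (f - t • d)) 0 :=
      hQf.comp (f := fun t : ℝ => f - t • d) hpath.continuousAt
    exact continuousAt_const.inner (continuousAt_const.sub hQpath)
  have hmemS : ∀ᶠ t : ℝ in 𝓝 0, f - t • d ∈ S :=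
    hpath.continuousAt.preimage_mem_nhds (by simpa using hS.mem_nhds hf)
  have hnonpos : ∀ᶠ t : ℝ in 𝓝[>] 0, ⟪d, x - Q (f - t • d)⟫_ℝ ≤ 0 := by
    filter_upwards [nhdsWithin_le_nhds hmemS, self_mem_nhdsWithin] with t hgS (ht : 0 < t)
    have hfx : ⟪f, x⟫_ℝ ≤ ⟪f, Q (f - t • d)⟫_ℝ :=
      hle.trans (hmin f hf _ (hImQ ⟨_, hgS, rfl⟩))
    have key := inner_sub_sub_nonpos_of_le_of_le hfx (hmin _ hgS x hx)
    rw [sub_sub_cancel, real_inner_smul_left] at key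
    exact nonpos_of_mul_nonpos_right key ht
  have hdd : ⟪d, d⟫_ℝ ≤ 0 := by
    simpa [d] using le_of_tendsto (hcont.tendsto.mono_left nhdsWithin_le_nhds) hnonpos
  exact sub_eq_zero.mp (real_inner_self_nonpos.mp hdd)

end

theorem stmt4_general {W : Type*} [NormedAddCommGroup W] [InnerProductSpace ℝ W]
    (L : Set W) (C : Set W) (Q : W → W)
    (hQcont : ContinuousOn Q (interior {f : W | ∀ x ∈ L, 0 ≤ ⟪f, x⟫_ℝ}))
    (hImQ : Q '' interior {f : W | ∀ x ∈ L, 0 ≤ ⟪f, x⟫_ℝ} ⊆ C)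
    (hge : ∀ f ∈ interior {f : W | ∀ x ∈ L, 0 ≤ ⟪f, x⟫_ℝ},
      ∀ x ∈ C, ⟪f, Q f⟫_ℝ ≤ ⟪f, x⟫_ℝ) :
    ∀ f ∈ interior {f : W | ∀ x ∈ L, 0 ≤ ⟪f, x⟫_ℝ},
      ∀ x ∈ C, x ≠ Q f → ⟪f, Q f⟫_ℝ < ⟪f, x⟫_ℝ := by
  intro f hf x hx hne
  refine (hge f hf x hx).lt_of_ne fun heq => hne ?_
  exact eq_of_inner_le_of_forall_inner_le isOpen_interior hQcont hImQ hge hf hx heq.ge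

/-- `W` finite-dimensional real inner product space, `L` a closed
convex cone, `C ⊆ L` an `L`-stable convex set containing `Im Q`, and
`Q : int(L*) → L` a quasi-conic continuous map (strict inequality on `Im Q`).
If `⟪f, x⟫ ≥ ⟪f, Q f⟫` for all `f ∈ int(L*)` and all `x ∈ C`, then for all
`f ∈ int(L*)` and `x ∈ C` with `x ≠ Q f` one has `⟪f, x⟫ > ⟪f, Q f⟫`. -/
theorem stmt4 {W : Type*} [NormedAddCommGroup W] [InnerProductSpace ℝ W]
    [FiniteDimensional ℝ W]
    (L : Set W) (hLclosed : IsClosed L) (hLconvex : Convex ℝ L)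
    (hLcone : ∀ x ∈ L, ∀ c : ℝ, 0 ≤ c → c • x ∈ L)
    (C : Set W) (hCL : C ⊆ L) (hCconvex : Convex ℝ C) (hstable : C + L = C)
    (Q : W → W)
    (hQcont : ContinuousOn Q (interior {f : W | ∀ x ∈ L, 0 ≤ ⟪f, x⟫_ℝ}))
    (hQmaps : ∀ f ∈ interior {f : W | ∀ x ∈ L, 0 ≤ ⟪f, x⟫_ℝ}, Q f ∈ L)
    (hImQ : Q '' interior {f : W | ∀ x ∈ L, 0 ≤ ⟪f, x⟫_ℝ} ⊆ C)
    (hquasi : ∀ f ∈ interior {f : W | ∀ x ∈ L, 0 ≤ ⟪f, x⟫_ℝ},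
      ∀ g ∈ interior {f : W | ∀ x ∈ L, 0 ≤ ⟪f, x⟫_ℝ},
        Q g ≠ Q f → ⟪f, Q f⟫_ℝ < ⟪f, Q g⟫_ℝ)
    (hge : ∀ f ∈ interior {f : W | ∀ x ∈ L, 0 ≤ ⟪f, x⟫_ℝ},
      ∀ x ∈ C, ⟪f, Q f⟫_ℝ ≤ ⟪f, x⟫_ℝ) :
    ∀ f ∈ interior {f : W | ∀ x ∈ L, 0 ≤ ⟪f, x⟫_ℝ},
      ∀ x ∈ C, x ≠ Q f → ⟪f, Q f⟫_ℝ < ⟪f, x⟫_ℝ :=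
  stmt4_general L C Q hQcont hImQ hge
end

section
/- Let ρ ≥ 0 be a trace-class self-adjoint operator on a separable Hilbert space H and X a self-adjoint operator with tr(XρX) < ∞. Then there exists a sequence (X_m) of finite-rank self-adjoint operators on H such that tr((X − X_m) ρ (X − X_m)) → 0 as m → ∞. -/
open scoped InnerProductSpace
open Filter

/-!
Let `Pₘ` be the orthogonal projection onto the span of `φ j` and `X (φ j)` for `j < m`. Then
`Xₘ = Pₘ X Pₘ` agrees with `X` on `φ j` for `j < m`, so the `j`-th term of the series vanishes
for `m > j`, and every term is dominated by `(2‖X‖)² s j` since `‖Xₘ‖ ≤ ‖X‖`. Tannery's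
theorem (dominated convergence for series) gives the limit.
-/

section Compression

variable {𝕜 E : Type*} [RCLike 𝕜] [NormedAddCommGroup E] [InnerProductSpace 𝕜 E]

noncomputable def compression (K : Submodule 𝕜 E) [K.HasOrthogonalProjection]
    (T : E →L[𝕜] E) : E →L[𝕜] E :=
  K.starProjection ∘L T ∘L K.starProjection

variable (K : Submodule 𝕜 E) [K.HasOrthogonalProjection] (T : E →L[𝕜] E)

theorem IsSelfAdjoint.compression [CompleteSpace E] (hT : IsSelfAdjoint T) :
    IsSelfAdjoint (compression K T) :=
  hT.conj_starProjection K

theorem range_compression_le : LinearMap.range (compression K T : E →ₗ[𝕜] E) ≤ K := by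
  rintro _ ⟨x, rfl⟩
  exact K.starProjection_apply_mem _

theorem compression_apply_of_mem {x : E} (hx : x ∈ K) (hTx : T x ∈ K) :
    compression K T x = T x := by
  simp only [compression, ContinuousLinearMap.comp_apply,
    Submodule.starProjection_eq_self_iff.mpr hx, Submodule.starProjection_eq_self_iff.mpr hTx]

theorem norm_compression_le : ‖compression K T‖ ≤ ‖T‖ :=
  calc ‖compression K T‖ ≤ ‖K.starProjection‖ * (‖T‖ * ‖K.starProjection‖) :=
        (ContinuousLinearMap.opNorm_comp_le _ _).trans <|
          mul_le_mul_of_nonneg_left (ContinuousLinearMap.opNorm_comp_le _ _) (norm_nonneg _)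
    _ ≤ 1 * (‖T‖ * 1) := by gcongr <;> exact K.starProjection_norm_le
    _ = ‖T‖ := by ring

theorem norm_sub_compression_le : ‖T - compression K T‖ ≤ 2 * ‖T‖ :=
  calc ‖T - compression K T‖ ≤ ‖T‖ + ‖compression K T‖ := norm_sub_le _ _
    _ ≤ 2 * ‖T‖ := by linarith [norm_compression_le K T]

end Compression

section SpanWithImage

variable {𝕜 E : Type*} [DivisionRing 𝕜] [AddCommGroup E] [Module 𝕜 E]

def spanWithImage (T : E → E) (v : ℕ → E) (m : ℕ) : Submodule 𝕜 E :=
  Submodule.span 𝕜 (v '' Set.Iio m ∪ T '' (v '' Set.Iio m))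

variable (T : E → E) (v : ℕ → E) (m : ℕ)

instance : FiniteDimensional 𝕜 (spanWithImage (𝕜 := 𝕜) T v m) :=
  FiniteDimensional.span_of_finite 𝕜 <|
    ((Set.finite_Iio m).image v).union (((Set.finite_Iio m).image v).image T)

variable {m}

theorem mem_spanWithImage {j : ℕ} (hj : j < m) : v j ∈ spanWithImage (𝕜 := 𝕜) T v m :=
  Submodule.subset_span <| Or.inl ⟨j, hj, rfl⟩

theorem apply_mem_spanWithImage {j : ℕ} (hj : j < m) : T (v j) ∈ spanWithImage (𝕜 := 𝕜) T v m :=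
  Submodule.subset_span <| Or.inr ⟨v j, ⟨j, hj, rfl⟩, rfl⟩

end SpanWithImage

theorem compression_spanWithImage_apply {𝕜 E : Type*} [RCLike 𝕜] [NormedAddCommGroup E]
    [InnerProductSpace 𝕜 E] (T : E →L[𝕜] E) (v : ℕ → E) {m j : ℕ} (hj : j < m) :
    compression (spanWithImage T v m) T (v j) = T (v j) :=
  compression_apply_of_mem _ T (mem_spanWithImage T v hj) (apply_mem_spanWithImage T v hj)

theorem stmt6_general {H : Type*} [NormedAddCommGroup H] [InnerProductSpace ℂ H]
    [CompleteSpace H]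
    (s : ℕ → ℝ) (hs : ∀ j, 0 ≤ s j) (hsum : Summable s)
    (φ : ℕ → H) (hφ : Orthonormal ℂ φ)
    (X : H →L[ℂ] H)
    (hX : IsSelfAdjoint X) :
    ∃ Xm : ℕ → H →L[ℂ] H,
      (∀ m, IsSelfAdjoint (Xm m)) ∧
      (∀ m, FiniteDimensional ℂ (LinearMap.range ((Xm m : H →ₗ[ℂ] H)))) ∧
      Tendsto (fun m => ∑' j, s j * ‖(X - Xm m) (φ j)‖ ^ 2) atTop (nhds 0) := by
  set Xm := fun m => compression (spanWithImage X φ m) X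
  refine ⟨Xm, fun m => hX.compression _, fun m =>
    Submodule.finiteDimensional_of_le (range_compression_le _ X), ?_⟩
  have h_eventually_zero (j : ℕ) : (fun m => s j * ‖(X - Xm m) (φ j)‖ ^ 2) =ᶠ[atTop] 0 :=
    (eventually_gt_atTop j).mono fun m hj => by
      simp [Xm, compression_spanWithImage_apply X φ hj]
  have h_bound (m j : ℕ) : ‖s j * ‖(X - Xm m) (φ j)‖ ^ 2‖ ≤ (2 * ‖X‖) ^ 2 * s j := by
    have hle : ‖(X - Xm m) (φ j)‖ ≤ 2 * ‖X‖ := by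
      simpa [hφ.1 j] using (X - Xm m).le_opNorm (φ j) |>.trans
        (mul_le_mul_of_nonneg_right (norm_sub_compression_le _ X) (norm_nonneg _))
    rw [Real.norm_of_nonneg (mul_nonneg (hs j) (sq_nonneg _)), mul_comm]
    gcongr
    exact hs j
  simpa using tendsto_tsum_of_dominated_convergence (hsum.mul_left _)
    (fun j => tendsto_const_nhds.congr' (h_eventually_zero j).symm)
    (Eventually.of_forall h_bound)

/-- Let `ρ ≥ 0` be trace class self-adjoint on a separable Hilbert
space, given by its spectral decomposition `ρ = ∑ j, s j • |φ j⟩⟨φ j|`, and `X`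
self-adjoint with `tr(XρX) = ∑' j, s j * ‖X (φ j)‖² < ∞`.  Then there is a
sequence `Xₘ` of finite-rank self-adjoint operators with
`tr((X − Xₘ) ρ (X − Xₘ)) → 0`. -/
theorem stmt6 {H : Type*} [NormedAddCommGroup H] [InnerProductSpace ℂ H]
    [CompleteSpace H] [TopologicalSpace.SeparableSpace H]
    (s : ℕ → ℝ) (hs : ∀ j, 0 ≤ s j) (hsum : Summable s)
    (φ : ℕ → H) (hφ : Orthonormal ℂ φ)
    (ρ X : H →L[ℂ] H) (hρsa : IsSelfAdjoint ρ)
    (hρdef : ∀ x : H, ρ x = ∑' j, (s j : ℂ) • (⟪φ j, x⟫_ℂ • φ j))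
    (hX : IsSelfAdjoint X)
    (hfin : Summable (fun j => s j * ‖X (φ j)‖ ^ 2)) :
    ∃ Xm : ℕ → H →L[ℂ] H,
      (∀ m, IsSelfAdjoint (Xm m)) ∧
      (∀ m, FiniteDimensional ℂ (LinearMap.range ((Xm m : H →ₗ[ℂ] H)))) ∧
      Tendsto (fun m => ∑' j, s j * ‖(X - Xm m) (φ j)‖ ^ 2) atTop (nhds 0) :=
  stmt6_general s hs hsum φ hφ X hX
end

section
/- Let ρ = (1/2)(I + α σ₃) on C² with −1 < α < 1, and let T be the 3-dimensional real space of traceless Hermitian 2×2 matrices with the SLD inner product J⁻¹ given at ρ. For every e ∈ T with SLD norm ‖e‖ = 1, the operator J⁻¹(e)·ρ·J⁻¹(e) equals I − ρ, where J⁻¹(e) is the SLD of e (the Hermitian operator L with e = (1/2)(Lρ + ρL)). -/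
/-- For `ρ = (1/2)(I + α σ₃)` on `ℂ²` with `−1 < α < 1`, and any
traceless Hermitian `e` with SLD `L` (the Hermitian `L` with
`e = (1/2)(Lρ + ρL)`) of unit SLD norm (`tr(LρL) = 1`), the operator
`L ρ L` equals `I − ρ`. -/
theorem stmt9 (α : ℝ) (hα1 : -1 < α) (hα2 : α < 1)
    (ρ e L : Matrix (Fin 2) (Fin 2) ℂ)
    (hρ : ρ = (1 / 2 : ℂ) • ((1 : Matrix (Fin 2) (Fin 2) ℂ) +
      (α : ℂ) • !![1, 0; 0, -1]))
    (he : e.IsHermitian) (htr : e.trace = 0)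
    (hL : L.IsHermitian)
    (hSLD : e = (1 / 2 : ℂ) • (L * ρ + ρ * L))
    (hnorm : (L * ρ * L).trace = 1) :
    L * ρ * L = 1 - ρ := by
  subst hρ hSLD
  simp [Matrix.trace, Matrix.mul_apply, Fin.sum_univ_succ, Matrix.one_apply] at htr hnorm
  ext i j
  fin_cases i <;> fin_cases j <;>
    simp [Matrix.mul_apply, Fin.sum_univ_succ, Matrix.one_apply]
  · linear_combination ((1+(α:ℂ))/2 * L 0 0 - (1-(α:ℂ))/2 * L 1 1) * htr + ((1-(α:ℂ))/2) * hnorm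
  · linear_combination L 0 1 * htr
  · linear_combination L 1 0 * htr
  · linear_combination (-(1+(α:ℂ))/2 * L 0 0 + (1-(α:ℂ))/2 * L 1 1) * htr + ((1+(α:ℂ))/2) * hnorm
end

section
/- Let T be a finite-dimensional real inner product space with inner product J, and g = W* J W a positive quadratic form on T with W self-adjoint positive and tr W = 1. Let W have spectral decomposition W = Σ_i W_i e_i⊗e_i with ‖e_i‖ = 1. Then the convex combination measure p = Σ_i W_i δ_{(W_i⁻¹ e_i, J⁻¹ e_i)} on T × T* satisfies: ∫∫ ⟨X, a(x)⟩ dp(x,X) = tr a for all a ∈ End(T), and ∫∫ g(x,x)‖X‖² dp(x,X) = 1, and the resulting covariance matrix ∫∫ ‖X‖² x⊗x dp(x,X) equals W⁻¹J. -/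
open scoped InnerProductSpace
open Finset

/-! Since `e` is an orthonormal basis, `W` and `W⁻¹` are diagonal in it with eigenvalues `wᵢ` and
`wᵢ⁻¹`, and `tr a = ∑ ⟪eᵢ, a eᵢ⟫`; in particular `∑ wᵢ = tr W = 1`. Each of the three identities is
then a termwise computation in this basis. -/

theorem Orthonormal.exists_orthonormalBasis_coe_eq {𝕜 E ι : Type*} [RCLike 𝕜]
    [NormedAddCommGroup E] [InnerProductSpace 𝕜 E] [FiniteDimensional 𝕜 E] [Fintype ι]
    {v : ι → E} (hv : Orthonormal 𝕜 v) (hcard : Fintype.card ι = Module.finrank 𝕜 E) :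
    ∃ b : OrthonormalBasis ι 𝕜 E, ⇑b = v :=
  ⟨.mk hv (hv.linearIndependent.span_eq_top_of_card_eq_finrank' hcard).ge,
    OrthonormalBasis.coe_mk _ _⟩

theorem OrthonormalBasis.inner_apply_eq_sum_of_apply_eq_smul {E ι : Type*} [Fintype ι]
    [NormedAddCommGroup E] [InnerProductSpace ℝ E] (b : OrthonormalBasis ι ℝ E)
    {A : E →ₗ[ℝ] E} {μ : ι → ℝ} (hA : ∀ i, A (b i) = μ i • b i) (u v : E) :
    ⟪A u, v⟫_ℝ = ∑ i, μ i * ⟪b i, u⟫_ℝ * ⟪b i, v⟫_ℝ := by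
  conv_lhs => rw [← b.sum_repr' u]
  simp only [map_sum, map_smul, hA, smul_smul, sum_inner, real_inner_smul_left]
  exact sum_congr rfl fun i _ => by ring

theorem Module.End.apply_eq_inv_smul_of_mul_eq_one {R M : Type*} [Field R] [AddCommGroup M]
    [Module R M] {f g : Module.End R M} (hfg : f * g = 1) {c : R} (hc : c ≠ 0) {x : M}
    (hx : g x = c • x) : f x = c⁻¹ • x := by
  have : f (g x) = x := by rw [← Module.End.mul_apply, hfg, Module.End.one_apply]
  rw [hx, map_smul] at this
  calc f x = c⁻¹ • c • f x := by rw [smul_smul, inv_mul_cancel₀ hc, one_smul]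
    _ = c⁻¹ • x := by rw [this]

theorem stmt11_general {T : Type*} [NormedAddCommGroup T] [InnerProductSpace ℝ T]
    [FiniteDimensional ℝ T] {n : ℕ} (hn : Module.finrank ℝ T = n)
    (W : Module.End ℝ T)
    (htrW : LinearMap.trace ℝ T W = 1)
    (e : Fin n → T) (he : Orthonormal ℝ e)
    (w : Fin n → ℝ) (hwpos : ∀ i, 0 < w i) (hWe : ∀ i, W (e i) = w i • e i)
    (Winv : Module.End ℝ T) (hWinv : Winv * W = 1) :
    (∀ a : Module.End ℝ T,
        ∑ i, w i * ⟪e i, a ((w i)⁻¹ • e i)⟫_ℝ = LinearMap.trace ℝ T a) ∧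
    (∑ i, w i * (⟪W ((w i)⁻¹ • e i), W ((w i)⁻¹ • e i)⟫_ℝ * ‖e i‖ ^ 2) = 1) ∧
    (∀ u v : T,
        ∑ i, w i * ‖e i‖ ^ 2 *
          (⟪(w i)⁻¹ • e i, u⟫_ℝ * ⟪(w i)⁻¹ • e i, v⟫_ℝ) = ⟪Winv u, v⟫_ℝ) := by
  obtain ⟨b, rfl⟩ := he.exists_orthonormalBasis_coe_eq (by simp [hn])
  have hw0 : ∀ i, w i ≠ 0 := fun i => (hwpos i).ne'
  have hsum : ∑ i, w i = 1 := by
    rw [← htrW, LinearMap.trace_eq_sum_inner W b]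
    simp [hWe, real_inner_smul_right]
  have hWinv_b : ∀ i, Winv (b i) = (w i)⁻¹ • b i := fun i =>
    Module.End.apply_eq_inv_smul_of_mul_eq_one hWinv (hw0 i) (hWe i)
  refine ⟨fun a => ?_, ?_, fun u v => ?_⟩
  · simp [LinearMap.trace_eq_sum_inner a b, real_inner_smul_right, hw0]
  · simp [hWe, smul_smul, hw0, hsum]
  · rw [b.inner_apply_eq_sum_of_apply_eq_smul hWinv_b]
    refine sum_congr rfl fun i _ => ?_
    simp only [b.orthonormal.1 i, real_inner_smul_left]
    field_simp [hw0 i]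

/-- Let `T` be a finite-dimensional real inner product space (inner
product `J`), `W` a positive self-adjoint endomorphism with `tr W = 1` and
spectral decomposition `W = ∑ i, w i • (e i ⊗ e i)` with `e` orthonormal and
`‖e i‖ = 1`.  The convex combination `p = ∑ i, w i • δ_{(wᵢ⁻¹ eᵢ, J⁻¹ eᵢ)}`
(here `T*` is identified with `T` via `J`) satisfies local unbiasedness
`∫∫ ⟨X, a x⟩ dp = tr a` for every `a ∈ End T`, its deviation
`∫∫ g(x,x)‖X‖² dp` equals `1` (with `g = W*JW`), and its covariance
`∫∫ ‖X‖² x⊗x dp` equals `W⁻¹J`. -/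
theorem stmt11 {T : Type*} [NormedAddCommGroup T] [InnerProductSpace ℝ T]
    [FiniteDimensional ℝ T] {n : ℕ} (hn : Module.finrank ℝ T = n)
    (W : Module.End ℝ T)
    (hWsa : ∀ u v : T, ⟪W u, v⟫_ℝ = ⟪u, W v⟫_ℝ)
    (hWpos : ∀ u : T, u ≠ 0 → 0 < ⟪W u, u⟫_ℝ)
    (htrW : LinearMap.trace ℝ T W = 1)
    (e : Fin n → T) (he : Orthonormal ℝ e)
    (w : Fin n → ℝ) (hwpos : ∀ i, 0 < w i) (hWe : ∀ i, W (e i) = w i • e i)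
    (Winv : Module.End ℝ T) (hWinv : Winv * W = 1) (hWinv' : W * Winv = 1) :
    (∀ a : Module.End ℝ T,
        ∑ i, w i * ⟪e i, a ((w i)⁻¹ • e i)⟫_ℝ = LinearMap.trace ℝ T a) ∧
    (∑ i, w i * (⟪W ((w i)⁻¹ • e i), W ((w i)⁻¹ • e i)⟫_ℝ * ‖e i‖ ^ 2) = 1) ∧
    (∀ u v : T,
        ∑ i, w i * ‖e i‖ ^ 2 *
          (⟪(w i)⁻¹ • e i, u⟫_ℝ * ⟪(w i)⁻¹ • e i, v⟫_ℝ) = ⟪Winv u, v⟫_ℝ) :=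
  stmt11_general hn W htrW e he w hwpos hWe Winv hWinv
end

section
/- Let T be an n-dimensional real inner product space with inner product J, g = W*JW with W positive self-adjoint and tr W = 1. Then R(x, X) := ‖W(x)‖²‖X‖² − 2⟨X, W(x)⟩ + 1 ≥ 0 for all x ∈ T and X ∈ T*, and the infimum of ∫∫ g(x,x)‖X‖² dp over probability measures p on T × T* satisfying the local unbiasedness constraint ∫∫ ⟨X, a(x)⟩ dp = tr a for all a ∈ End(T) equals 1. -/
/-!
`2⟨X, W x⟩ ≤ ‖W x‖²‖X‖² + 1` pointwise (Cauchy–Schwarz and AM–GM), so integrating against a locally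
unbiased `p` and using `∫∫ ⟨X, W x⟩ dp = tr W = 1` bounds the deviation below by `1`. Equality is
attained by `p = Σᵢ wᵢ δ_{(wᵢ⁻¹ eᵢ, eᵢ)}` for an orthonormal eigenbasis `W eᵢ = wᵢ eᵢ`: there
`‖W x‖ ‖X‖ = 1` and `⟨X, W x⟩ = 1` on the support.
-/

open scoped InnerProductSpace
open MeasureTheory

section Inequality

variable {E : Type*} [NormedAddCommGroup E] [InnerProductSpace ℝ E]

theorem two_mul_real_inner_le_norm_sq_mul_norm_sq_add_one (x y : E) :
    2 * ⟪x, y⟫_ℝ ≤ ‖y‖ ^ 2 * ‖x‖ ^ 2 + 1 := by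
  nlinarith [real_inner_le_norm x y, sq_nonneg (‖y‖ * ‖x‖ - 1)]

theorem one_le_integral_norm_sq_mul_norm_sq {α : Type*} [MeasurableSpace α] {p : Measure α}
    [IsProbabilityMeasure p] {f g : α → E}
    (hfg : Integrable (fun a => ‖f a‖ ^ 2 * ‖g a‖ ^ 2) p)
    (hinner : Integrable (fun a => ⟪g a, f a⟫_ℝ) p) (hone : ∫ a, ⟪g a, f a⟫_ℝ ∂p = 1) :
    1 ≤ ∫ a, ‖f a‖ ^ 2 * ‖g a‖ ^ 2 ∂p := by
  have hmono : ∫ a, 2 * ⟪g a, f a⟫_ℝ ∂p ≤ ∫ a, (‖f a‖ ^ 2 * ‖g a‖ ^ 2 + 1) ∂p :=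
    integral_mono (hinner.const_mul 2) (hfg.add (integrable_const 1)) fun a =>
      two_mul_real_inner_le_norm_sq_mul_norm_sq_add_one (g a) (f a)
  rw [integral_const_mul, hone, integral_add hfg (integrable_const 1), integral_const,
    probReal_univ, smul_eq_mul, mul_one] at hmono
  linarith

end Inequality

namespace LinearMap.IsSymmetric

variable {E : Type*} [NormedAddCommGroup E] [InnerProductSpace ℝ E] [FiniteDimensional ℝ E]
  {T : Module.End ℝ E} {n : ℕ}

theorem eigenvalues_pos (hT : T.IsSymmetric) (hpos : ∀ u : E, u ≠ 0 → 0 < ⟪T u, u⟫_ℝ)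
    (hn : Module.finrank ℝ E = n) (i : Fin n) : 0 < hT.eigenvalues hn i := by
  have h := hpos _ ((hT.eigenvectorBasis hn).toBasis.ne_zero i)
  rwa [OrthonormalBasis.coe_toBasis, hT.apply_eigenvectorBasis, real_inner_smul_left,
    real_inner_self_eq_norm_sq, (hT.eigenvectorBasis hn).orthonormal.1 i, one_pow, mul_one] at h

end LinearMap.IsSymmetric

section LocallyUnbiasedMeasure

variable {E ι : Type*} [NormedAddCommGroup E] [InnerProductSpace ℝ E] [MeasurableSpace E]
  [Fintype ι]

noncomputable def locallyUnbiasedMeasure (b : OrthonormalBasis ι ℝ E) (w : ι → ℝ) :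
    Measure (E × E) :=
  Measure.sum fun i => ENNReal.ofReal (w i) • Measure.dirac ((w i)⁻¹ • b i, b i)

variable (b : OrthonormalBasis ι ℝ E) {w : ι → ℝ}

theorem isProbabilityMeasure_locallyUnbiasedMeasure (hw : ∀ i, 0 ≤ w i) (hsum : ∑ i, w i = 1) :
    IsProbabilityMeasure (locallyUnbiasedMeasure b w) := by
  constructor
  simp only [locallyUnbiasedMeasure, Measure.sum_apply _ MeasurableSet.univ, Measure.smul_apply,
    measure_univ, smul_eq_mul, mul_one, tsum_fintype]
  rw [← ENNReal.ofReal_sum_of_nonneg fun i _ => hw i, hsum, ENNReal.ofReal_one]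

variable [MeasurableSingletonClass E]

theorem integrable_locallyUnbiasedMeasure (f : E × E → ℝ) :
    Integrable f (locallyUnbiasedMeasure b w) :=
  integrable_sum_dirac (fun _ => ENNReal.ofReal_ne_top) Summable.of_finite

theorem integral_locallyUnbiasedMeasure (hw : ∀ i, 0 ≤ w i) (f : E × E → ℝ) :
    ∫ z, f z ∂locallyUnbiasedMeasure b w = ∑ i, w i * f ((w i)⁻¹ • b i, b i) := by
  rw [locallyUnbiasedMeasure, integral_sum_dirac fun _ => ENNReal.ofReal_ne_top, tsum_fintype]
  simp only [ENNReal.toReal_ofReal (hw _), smul_eq_mul]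

theorem integral_inner_locallyUnbiasedMeasure (hw : ∀ i, 0 < w i) (a : Module.End ℝ E) :
    ∫ z, ⟪z.2, a z.1⟫_ℝ ∂locallyUnbiasedMeasure b w = LinearMap.trace ℝ E a := by
  rw [integral_locallyUnbiasedMeasure b fun i => (hw i).le, a.trace_eq_sum_inner b]
  refine Finset.sum_congr rfl fun i _ => ?_
  rw [map_smul, real_inner_smul_right, ← mul_assoc, mul_inv_cancel₀ (hw i).ne', one_mul]

theorem integral_norm_sq_mul_norm_sq_locallyUnbiasedMeasure (hw : ∀ i, 0 < w i)
    {W : Module.End ℝ E} (hW : ∀ i, W (b i) = w i • b i) :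
    ∫ z, ‖W z.1‖ ^ 2 * ‖z.2‖ ^ 2 ∂locallyUnbiasedMeasure b w = ∑ i, w i := by
  rw [integral_locallyUnbiasedMeasure b fun i => (hw i).le]
  refine Finset.sum_congr rfl fun i _ => ?_
  rw [map_smul, hW, smul_smul, inv_mul_cancel₀ (hw i).ne', one_smul, b.orthonormal.1 i]
  ring

end LocallyUnbiasedMeasure

/-- `T` an `n`-dimensional real inner product space (inner product
`J`, identifying `T*` with `T`), `g = W*JW` (so `g(x,x) = ⟪W x, W x⟫`) with `W`
positive self-adjoint and `tr W = 1`.  Then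
`R(x,X) = ‖W x‖²‖X‖² − 2⟨X, W x⟩ + 1 ≥ 0` for all `x ∈ T`, `X ∈ T*`, and the
infimum of the deviation `∫∫ g(x,x)‖X‖² dp` over locally unbiased probability
measures `p` on `T × T*` equals `1`. -/
theorem stmt13 {T : Type*} [NormedAddCommGroup T] [InnerProductSpace ℝ T]
    [FiniteDimensional ℝ T] [MeasurableSpace T] [BorelSpace T]
    (W : Module.End ℝ T)
    (hWsa : ∀ u v : T, ⟪W u, v⟫_ℝ = ⟪u, W v⟫_ℝ)
    (hWpos : ∀ u : T, u ≠ 0 → 0 < ⟪W u, u⟫_ℝ)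
    (htrW : LinearMap.trace ℝ T W = 1) :
    (∀ x X : T, 0 ≤ ‖W x‖ ^ 2 * ‖X‖ ^ 2 - 2 * ⟪X, W x⟫_ℝ + 1) ∧
    sInf {r : ℝ | ∃ p : Measure (T × T), IsProbabilityMeasure p ∧
      Integrable (fun z : T × T => ⟪W z.1, W z.1⟫_ℝ * ‖z.2‖ ^ 2) p ∧
      (∀ a : Module.End ℝ T,
        Integrable (fun z : T × T => ⟪z.2, a z.1⟫_ℝ) p) ∧
      (∀ a : Module.End ℝ T,
        ∫ z, ⟪z.2, a z.1⟫_ℝ ∂p = LinearMap.trace ℝ T a) ∧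
      r = ∫ z, ⟪W z.1, W z.1⟫_ℝ * ‖z.2‖ ^ 2 ∂p} = 1 := by
  simp only [real_inner_self_eq_norm_sq]
  refine ⟨fun x X => by linarith [two_mul_real_inner_le_norm_sq_mul_norm_sq_add_one X (W x)],
    IsLeast.csInf_eq ⟨?_, ?_⟩⟩
  · have hW : W.IsSymmetric := hWsa
    have hw := hW.eigenvalues_pos hWpos rfl
    have hsum : ∑ i, hW.eigenvalues rfl i = 1 := by
      simpa [htrW] using (hW.trace_eq_sum_eigenvalues rfl).symm
    have hdev := integral_norm_sq_mul_norm_sq_locallyUnbiasedMeasure _ hw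
      (hW.apply_eigenvectorBasis rfl)
    exact ⟨_, isProbabilityMeasure_locallyUnbiasedMeasure _ (fun i => (hw i).le) hsum,
      integrable_locallyUnbiasedMeasure _ _, fun _ => integrable_locallyUnbiasedMeasure _ _,
      integral_inner_locallyUnbiasedMeasure _ hw, by rw [hdev, hsum]⟩
  · rintro r ⟨p, hp, hdev, hinner, hunbiased, rfl⟩
    exact one_le_integral_norm_sq_mul_norm_sq hdev (hinner W) (by rw [hunbiased, htrW])
end

section
/- Let H be a finite-dimensional Hilbert space, ρ ≥ 0 a density matrix, T ⊆ T_sa(H) an n-dimensional subspace of traceless directions, g a positive quadratic form on T. Define U*(g) := { (a, S) ∈ End(T) × T_sa(H) : g(x,x)ρ − S − a(x) ≥ 0 for all x ∈ T } and Spur(a,S) := tr_T a + tr_H S. Then the set U*(g) ∩ Spur⁻¹([0, ∞)) is compact (with respect to the operator norm on End(T) and trace norm on T_sa(H)). -/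
/-!
Taking `x = 0` in the defining condition gives `S ≤ 0`, so `‖S‖ ≤ -tr S ≤ tr a ≲ ‖a‖` as soon as
`Spur (a, S) ≥ 0`. Conversely, replacing `x` by `t • x`, the operator
`t² g(x,x) ρ - S - t ι(a x)` is positive for every real `t`; the discriminant of this quadratic
in `t` bounds the self-adjoint operator `ι (a x)` by `2 √(|g(x,x)| ‖ρ‖ ‖S‖)`, and injectivity of `ι`
on the finite-dimensional `T` turns this into `‖a‖ ≲ √‖S‖`. The two estimates bound `‖S‖` and
`‖a‖`, and the set is closed in a finite-dimensional space.
-/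

noncomputable section

def clmTrace {d : ℕ}
    (A : EuclideanSpace ℂ (Fin d) →L[ℂ] EuclideanSpace ℂ (Fin d)) : ℂ :=
  LinearMap.trace ℂ (EuclideanSpace ℂ (Fin d))
    (A : EuclideanSpace ℂ (Fin d) →ₗ[ℂ] EuclideanSpace ℂ (Fin d))

open ContinuousLinearMap RCLike
open scoped InnerProductSpace

section OperatorBounds

variable {𝕜 E : Type*} [RCLike 𝕜] [NormedAddCommGroup E] [InnerProductSpace 𝕜 E]

theorem ContinuousLinearMap.norm_le_of_forall_abs_re_inner_self_le {A : E →L[𝕜] E}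
    (hA : (A : E →ₗ[𝕜] E).IsSymmetric) {M : ℝ} (hM : 0 ≤ M)
    (h : ∀ x, ‖x‖ = 1 → |re ⟪A x, x⟫_𝕜| ≤ M) : ‖A‖ ≤ M := by
  rw [A.norm_eq_iSup_rayleighQuotient hA]
  refine ciSup_le fun x => ?_
  rcases eq_or_ne x 0 with rfl | hx
  · simpa using hM
  have hx' : ‖x‖ ≠ 0 := norm_ne_zero_iff.2 hx
  have hunit : ‖((‖x‖⁻¹ : ℝ) : 𝕜) • x‖ = 1 := by
    rw [norm_smul, norm_ofReal, abs_inv, abs_norm, inv_mul_cancel₀ hx']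
  rw [← A.rayleigh_smul x (c := ((‖x‖⁻¹ : ℝ) : 𝕜)) (by simpa using hx'), rayleighQuotient,
    hunit, one_pow, div_one]
  exact h _ hunit

theorem ContinuousLinearMap.IsPositive.re_inner_self_le_re_trace [FiniteDimensional 𝕜 E]
    {A : E →L[𝕜] E} (hA : A.IsPositive) {x : E} (hx : ‖x‖ = 1) :
    re ⟪A x, x⟫_𝕜 ≤ re (LinearMap.trace 𝕜 E A) := by
  have hx' : Orthonormal 𝕜 ((↑) : ({x} : Set E) → E) :=
    orthonormal_subsingleton_iff.2 fun i => by rw [Set.mem_singleton_iff.1 i.2, hx]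
  obtain ⟨u, b, hxu, hb⟩ := hx'.exists_orthonormalBasis_extension
  rw [LinearMap.trace_eq_sum_inner _ b, map_sum, hb]
  have hmem : x ∈ u := hxu rfl
  calc re ⟪A x, x⟫_𝕜 = re ⟪x, A x⟫_𝕜 := by rw [← inner_re_symm]
    _ ≤ ∑ i : u, re ⟪(i : E), A i⟫_𝕜 :=
      Finset.single_le_sum (f := fun i : u => re ⟪(i : E), A i⟫_𝕜)
        (fun i _ => by rw [← inner_re_symm]; exact hA.re_inner_nonneg_left _)
        (Finset.mem_univ ⟨x, hmem⟩)

theorem ContinuousLinearMap.IsPositive.norm_le_re_trace [FiniteDimensional 𝕜 E]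
    {A : E →L[𝕜] E} (hA : A.IsPositive) : ‖A‖ ≤ re (LinearMap.trace 𝕜 E A) := by
  refine A.norm_le_of_forall_abs_re_inner_self_le hA.isSymmetric ?_ fun x hx => ?_
  · exact (RCLike.nonneg_iff.1 (LinearMap.IsPositive.trace_nonneg hA.toLinearMap)).1
  · rw [abs_of_nonneg (hA.re_inner_nonneg_left x)]
    exact hA.re_inner_self_le_re_trace hx

theorem ContinuousLinearMap.abs_re_inner_self_le_norm (A : E →L[𝕜] E) {x : E} (hx : ‖x‖ = 1) :
    |re ⟪A x, x⟫_𝕜| ≤ ‖A‖ := by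
  simpa [rayleighQuotient, reApplyInnerSelf_apply, hx] using A.rayleighQuotient_le_norm x

theorem ContinuousLinearMap.norm_le_two_mul_sqrt_of_forall_isPositive {P S B : E →L[𝕜] E}
    (hB : (B : E →ₗ[𝕜] E).IsSymmetric)
    (h : ∀ t : ℝ, ((t : 𝕜) ^ 2 • P - S - (t : 𝕜) • B).IsPositive) :
    ‖B‖ ≤ 2 * √(‖P‖ * ‖S‖) := by
  refine B.norm_le_of_forall_abs_re_inner_self_le hB (by positivity) fun v hv => ?_
  have hquad : ∀ t : ℝ,
      0 ≤ re ⟪P v, v⟫_𝕜 * (t * t) + (-re ⟪B v, v⟫_𝕜) * t + -re ⟪S v, v⟫_𝕜 := fun t => by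
    have := (h t).re_inner_nonneg_left v
    simp only [sub_apply, smul_apply, inner_sub_left, inner_smul_left, map_sub, ← ofReal_pow,
      conj_ofReal, re_ofReal_mul] at this
    linarith
  have hdisc : re ⟪B v, v⟫_𝕜 ^ 2 ≤ 4 * re ⟪P v, v⟫_𝕜 * -re ⟪S v, v⟫_𝕜 := by
    have := discrim_le_zero hquad
    rw [discrim] at this
    linarith
  have hS : 0 ≤ -re ⟪S v, v⟫_𝕜 := by simpa using hquad 0
  have hP := le_of_abs_le (P.abs_re_inner_self_le_norm hv)
  have hS' := neg_le_of_abs_le (S.abs_re_inner_self_le_norm hv)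
  calc |re ⟪B v, v⟫_𝕜| ≤ √(2 ^ 2 * (‖P‖ * ‖S‖)) := Real.abs_le_sqrt (by
        nlinarith [mul_le_mul_of_nonneg_right hP hS,
          mul_le_mul_of_nonneg_left (neg_le.1 hS') (norm_nonneg P)])
    _ = 2 * √(‖P‖ * ‖S‖) := by rw [Real.sqrt_mul (by norm_num), Real.sqrt_sq (by norm_num)]

end OperatorBounds

section UStar

variable {H : Type*} [NormedAddCommGroup H] [InnerProductSpace ℂ H]
  {T : Type*} [NormedAddCommGroup T] [NormedSpace ℝ T]

def spur (p : (T →L[ℝ] T) × (H →L[ℂ] H)) : ℝ :=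
  LinearMap.trace ℝ T (p.1 : T →ₗ[ℝ] T) + (LinearMap.trace ℂ H (p.2 : H →ₗ[ℂ] H)).re

theorem continuous_spur [FiniteDimensional ℝ T] [FiniteDimensional ℂ H] :
    Continuous (spur : (T →L[ℝ] T) × (H →L[ℂ] H) → ℝ) := by
  have htr₁ := LinearMap.continuous_of_finiteDimensional ((LinearMap.trace ℝ T).comp (coeLM ℝ))
  have htr₂ := LinearMap.continuous_of_finiteDimensional ((LinearMap.trace ℂ H).comp (coeLM ℂ))
  exact (htr₁.comp continuous_fst).add (Complex.continuous_re.comp (htr₂.comp continuous_snd))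

variable [CompleteSpace H]

def uStar (ρ : H →L[ℂ] H) (ι : T →L[ℝ] H →L[ℂ] H) (g : T →ₗ[ℝ] T →ₗ[ℝ] ℝ) :
    Set ((T →L[ℝ] T) × (H →L[ℂ] H)) :=
  {p | IsSelfAdjoint p.2 ∧ ∀ x, ((g x x : ℂ) • ρ - p.2 - ι (p.1 x)).IsPositive}

variable {ρ : H →L[ℂ] H} {ι : T →L[ℝ] H →L[ℂ] H} {g : T →ₗ[ℝ] T →ₗ[ℝ] ℝ}

theorem isPositive_neg_snd_of_mem_uStar {p : (T →L[ℝ] T) × (H →L[ℂ] H)} (hp : p ∈ uStar ρ ι g) :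
    (-p.2).IsPositive := by
  simpa using hp.2 0

theorem isClosed_uStar : IsClosed (uStar ρ ι g) := by
  have hpos : IsClosed {A : H →L[ℂ] H | A.IsPositive} := by
    simp_rw [← nonneg_iff_isPositive]
    exact isClosed_Ici
  have hsa : IsClosed {A : H →L[ℂ] H | IsSelfAdjoint A} := isClosed_eq continuous_star continuous_id
  have : uStar ρ ι g = Prod.snd ⁻¹' {A | IsSelfAdjoint A} ∩ ⋂ x,
      (fun p : (T →L[ℝ] T) × (H →L[ℂ] H) => (g x x : ℂ) • ρ - p.2 - ι (p.1 x)) ⁻¹'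
        {A | A.IsPositive} := by
    ext p
    simp [uStar]
  rw [this]
  exact (hsa.preimage continuous_snd).inter <| isClosed_iInter fun x =>
    hpos.preimage <| (continuous_const.sub continuous_snd).sub <|
      ι.continuous.comp <| (apply ℝ T x).continuous.comp continuous_fst

theorem norm_apply_fst_le_of_mem_uStar (hsa : ∀ y, IsSelfAdjoint (ι y))
    {p : (T →L[ℝ] T) × (H →L[ℂ] H)} (hp : p ∈ uStar ρ ι g) (x : T) :
    ‖ι (p.1 x)‖ ≤ 2 * √(|g x x| * ‖ρ‖ * ‖p.2‖) := by
  have key := norm_le_two_mul_sqrt_of_forall_isPositive (P := (g x x : ℂ) • ρ) (S := p.2)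
    (hsa (p.1 x)).isSymmetric fun t => ?_
  · simpa [norm_smul, mul_assoc] using key
  · have hg : g (t • x) (t • x) = t ^ 2 * g x x := by simp [sq, mul_assoc]
    convert hp.2 (t • x) using 2
    · rw [hg, smul_smul]; push_cast; rfl
    · rw [map_smul, map_smul, RCLike.real_smul_eq_coe_smul (K := ℂ)]

theorem exists_norm_fst_le_mul_sqrt_norm_snd [FiniteDimensional ℝ T] (hι : Function.Injective ι)
    (hsa : ∀ y, IsSelfAdjoint (ι y)) :
    ∃ K, 0 ≤ K ∧ ∀ p ∈ uStar ρ ι g, ‖p.1‖ ≤ K * √‖p.2‖ := by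
  obtain ⟨c, -, hc⟩ :=
    (ι : T →ₗ[ℝ] H →L[ℂ] H).exists_antilipschitzWith (LinearMap.ker_eq_bot.2 hι)
  set G := ‖g.toContinuousBilinearMap‖
  have hG : ∀ x, |g x x| ≤ G * ‖x‖ ^ 2 := fun x => by
    simpa [sq, mul_assoc] using g.toContinuousBilinearMap.le_opNorm₂ x x
  refine ⟨c * (2 * √(G * ‖ρ‖)), by positivity, fun p hp =>
    p.1.opNorm_le_bound (by positivity) fun x => ?_⟩
  calc ‖p.1 x‖ ≤ c * ‖ι (p.1 x)‖ := hc.le_mul_norm (map_zero _) _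
    _ ≤ c * (2 * √(|g x x| * ‖ρ‖ * ‖p.2‖)) := by
      gcongr; exact norm_apply_fst_le_of_mem_uStar hsa hp x
    _ ≤ c * (2 * √(G * ‖x‖ ^ 2 * ‖ρ‖ * ‖p.2‖)) := by gcongr; exact hG x
    _ = c * (2 * √(G * ‖ρ‖)) * √‖p.2‖ * ‖x‖ := by
      rw [show G * ‖x‖ ^ 2 * ‖ρ‖ * ‖p.2‖ = G * ‖ρ‖ * ‖p.2‖ * ‖x‖ ^ 2 by ring,
        Real.sqrt_mul (by positivity), Real.sqrt_mul (by positivity), Real.sqrt_sq (norm_nonneg x)]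
      ring

theorem norm_snd_le_trace_fst [FiniteDimensional ℂ H] {p : (T →L[ℝ] T) × (H →L[ℂ] H)}
    (hp : p ∈ uStar ρ ι g) (hspur : 0 ≤ spur p) : ‖p.2‖ ≤ LinearMap.trace ℝ T p.1 := by
  have := (isPositive_neg_snd_of_mem_uStar hp).norm_le_re_trace
  rw [norm_neg, toLinearMap_neg, map_neg, map_neg, RCLike.re_to_complex] at this
  unfold spur at hspur
  linarith

theorem isBounded_uStar_inter_spur_nonneg [FiniteDimensional ℝ T] [FiniteDimensional ℂ H]
    (hι : Function.Injective ι) (hsa : ∀ y, IsSelfAdjoint (ι y)) :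
    Bornology.IsBounded (uStar ρ ι g ∩ {p | 0 ≤ spur p}) := by
  obtain ⟨K, hK0, hK⟩ := exists_norm_fst_le_mul_sqrt_norm_snd (g := g) hι hsa
  let traceL := LinearMap.toContinuousLinearMap ((LinearMap.trace ℝ T).comp (coeLM ℝ))
  set C := ‖traceL‖
  refine isBounded_iff_forall_norm_le.2 ⟨max (K * (C * K)) ((C * K) ^ 2), fun p ⟨hp, hspur⟩ => ?_⟩
  have hS : ‖p.2‖ ≤ C * K * √‖p.2‖ := calc
    ‖p.2‖ ≤ LinearMap.trace ℝ T p.1 := norm_snd_le_trace_fst hp hspur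
    _ ≤ ‖traceL p.1‖ := le_abs_self _
    _ ≤ C * ‖p.1‖ := traceL.le_opNorm p.1
    _ ≤ C * K * √‖p.2‖ := by rw [mul_assoc]; gcongr; exact hK p hp
  have hsqrt : √‖p.2‖ ≤ C * K := by
    nlinarith [Real.mul_self_sqrt (norm_nonneg p.2), mul_nonneg (norm_nonneg traceL) hK0]
  refine norm_prod_le_iff.2 ⟨?_, ?_⟩
  · calc ‖p.1‖ ≤ K * √‖p.2‖ := hK p hp
      _ ≤ K * (C * K) := by gcongr
      _ ≤ _ := le_max_left _ _
  · calc ‖p.2‖ = √‖p.2‖ ^ 2 := (Real.sq_sqrt (norm_nonneg _)).symm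
      _ ≤ (C * K) ^ 2 := by gcongr
      _ ≤ _ := le_max_right _ _

theorem isCompact_uStar_inter_spur_nonneg [FiniteDimensional ℝ T] [FiniteDimensional ℂ H]
    (hι : Function.Injective ι) (hsa : ∀ y, IsSelfAdjoint (ι y)) :
    IsCompact (uStar ρ ι g ∩ {p | 0 ≤ spur p}) :=
  Metric.isCompact_of_isClosed_isBounded
    (isClosed_uStar.inter (isClosed_le continuous_const continuous_spur))
    (isBounded_uStar_inter_spur_nonneg hι hsa)

end UStar

theorem stmt14_general (d : ℕ)
    (ρ : EuclideanSpace ℂ (Fin d) →L[ℂ] EuclideanSpace ℂ (Fin d))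
    (T : Type*) [NormedAddCommGroup T] [NormedSpace ℝ T] [FiniteDimensional ℝ T]
    (ι : T →L[ℝ] EuclideanSpace ℂ (Fin d) →L[ℂ] EuclideanSpace ℂ (Fin d))
    (hι : Function.Injective ι)
    (hTsa : ∀ x : T, IsSelfAdjoint (ι x))
    (g : T →ₗ[ℝ] T →ₗ[ℝ] ℝ) :
    IsCompact {p : (T →L[ℝ] T) ×
        (EuclideanSpace ℂ (Fin d) →L[ℂ] EuclideanSpace ℂ (Fin d)) |
      IsSelfAdjoint p.2 ∧
      (∀ x : T, ((g x x : ℂ) • ρ - p.2 - ι (p.1 x)).IsPositive) ∧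
      0 ≤ LinearMap.trace ℝ T (p.1 : T →ₗ[ℝ] T) + (clmTrace p.2).re } := by
  convert isCompact_uStar_inter_spur_nonneg (ρ := ρ) (g := g) hι hTsa using 1
  exact Set.ext fun _ => and_assoc.symm

/-- `H` a finite-dimensional Hilbert space, `ρ ≥ 0` a density
matrix, `T` an `n`-dimensional subspace of traceless self-adjoint operators
(realized by a linear embedding `ι : T → T_sa(H)`), and `g` a positive quadratic
form on `T`.  With
`U*(g) = {(a,S) ∈ End(T) × T_sa(H) : g(x,x)ρ − S − a(x) ≥ 0 for all x ∈ T}` and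
`Spur(a,S) = tr_T a + tr_H S`, the set `U*(g) ∩ Spur⁻¹([0,∞))` is compact. -/
theorem stmt14 (d : ℕ)
    (ρ : EuclideanSpace ℂ (Fin d) →L[ℂ] EuclideanSpace ℂ (Fin d))
    (hρpos : ρ.IsPositive) (hρtr : clmTrace ρ = 1)
    (T : Type*) [NormedAddCommGroup T] [NormedSpace ℝ T] [FiniteDimensional ℝ T]
    (ι : T →L[ℝ] EuclideanSpace ℂ (Fin d) →L[ℂ] EuclideanSpace ℂ (Fin d))
    (hι : Function.Injective ι)
    (hTsa : ∀ x : T, IsSelfAdjoint (ι x))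
    (hTtr : ∀ x : T, clmTrace (ι x) = 0)
    (g : T →ₗ[ℝ] T →ₗ[ℝ] ℝ) (hgsymm : ∀ x y, g x y = g y x)
    (hgpos : ∀ x : T, x ≠ 0 → 0 < g x x) :
    IsCompact {p : (T →L[ℝ] T) ×
        (EuclideanSpace ℂ (Fin d) →L[ℂ] EuclideanSpace ℂ (Fin d)) |
      IsSelfAdjoint p.2 ∧
      (∀ x : T, ((g x x : ℂ) • ρ - p.2 - ι (p.1 x)).IsPositive) ∧
      0 ≤ LinearMap.trace ℝ T (p.1 : T →ₗ[ℝ] T) + (clmTrace p.2).re } :=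
  stmt14_general d ρ T ι hι hTsa g
end
end

section
/- Under the hypotheses of the dual bound: for any density matrix ρ on H, subspace T of self-adjoint traceless operators, positive quadratic form g on T, any locally unbiased measurement M (a positive-operator-valued measure on T with ∫ x tr(M(dx)ρ) = 0 and ∫ tr(a(x)M(dx)) = tr a for all a ∈ End(T)) and any (a, S) with g(x,x)ρ − S − a(x) ≥ 0 for all x ∈ T, one has ∫ g(x,x) tr(M(dx)ρ) ≥ tr_T a + tr_H S. -/
/-!
Pointwise, `tr (m x R(x)) ≥ 0` since both factors are positive: writing `R(x)` as a sum of
rank-one operators `|u⟩⟨u|`, the trace becomes a sum of `⟨u, m x u⟩ ≥ 0`. Expanding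
`R(x) = g(x,x) ρ - S - a(x)` and integrating against `ν`, the term in `S` integrates to `tr S`
because `∫ m dν = 1`, and the term in `a` to `tr_T a` by local unbiasedness.
-/

open MeasureTheory

noncomputable section

open InnerProductSpace
open scoped ComplexOrder

namespace ContinuousLinearMap

section RCLike

variable {𝕜 E : Type*} [RCLike 𝕜] [NormedAddCommGroup E] [InnerProductSpace 𝕜 E]
  [FiniteDimensional 𝕜 E]

theorem IsPositive.trace_comp_nonneg {A B : E →L[𝕜] E} (hA : A.IsPositive)
    (hB : B.IsPositive) : 0 ≤ LinearMap.trace 𝕜 E (A ∘L B) := by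
  obtain ⟨n, u, rfl⟩ := isPositive_iff_eq_sum_rankOne.mp hB
  simp only [comp_finsetSum, comp_rankOne, toLinearMap_sum, map_sum, trace_rankOne]
  exact Finset.sum_nonneg fun i _ => hA.inner_nonneg_right (u i)

theorem re_trace_comp_add_le_of_isPositive {M ρ S A : E →L[𝕜] E} {c : ℝ}
    (hM : M.IsPositive) (hR : ((c : 𝕜) • ρ - S - A).IsPositive) :
    RCLike.re (LinearMap.trace 𝕜 E (M ∘L S)) + RCLike.re (LinearMap.trace 𝕜 E (A ∘L M)) ≤
      c * RCLike.re (LinearMap.trace 𝕜 E (M ∘L ρ)) := by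
  have h := (RCLike.nonneg_iff.mp (hM.trace_comp_nonneg hR)).1
  rw [comp_sub, comp_sub, comp_smul, toLinearMap_sub, toLinearMap_sub, toLinearMap_smul] at h
  simp only [map_sub, map_smul, smul_eq_mul, RCLike.re_ofReal_mul] at h
  rw [toLinearMap_comp A M, LinearMap.trace_comp_comm', ← toLinearMap_comp]
  linarith

def traceCompRight (S : E →L[𝕜] E) : (E →L[𝕜] E) →L[𝕜] 𝕜 :=
  LinearMap.toContinuousLinearMap
    (LinearMap.trace 𝕜 E ∘ₗ coeLM 𝕜 ∘ₗ ((compL 𝕜 E E E).flip S).toLinearMap)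

@[simp] theorem traceCompRight_apply (S A : E →L[𝕜] E) :
    traceCompRight S A = LinearMap.trace 𝕜 E (A ∘L S) := rfl

end RCLike

variable {E : Type*} [NormedAddCommGroup E] [InnerProductSpace ℂ E] [FiniteDimensional ℂ E]
variable {X : Type*} [MeasurableSpace X] {ν : Measure X} {m : X → E →L[ℂ] E}

theorem integrable_re_trace_comp (hm : Integrable m ν) (S : E →L[ℂ] E) :
    Integrable (fun x => (LinearMap.trace ℂ E (m x ∘L S)).re) ν :=
  ((traceCompRight S).integrable_comp hm).re

theorem integral_re_trace_comp (hm : Integrable m ν) (S : E →L[ℂ] E) :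
    ∫ x, (LinearMap.trace ℂ E (m x ∘L S)).re ∂ν =
      (LinearMap.trace ℂ E ((∫ x, m x ∂ν) ∘L S)).re := by
  simp only [← traceCompRight_apply, ← RCLike.re_to_complex]
  rw [integral_re ((traceCompRight S).integrable_comp hm), (traceCompRight S).integral_comp_comm hm]

theorem re_trace_add_integral_le {ρ S : E →L[ℂ] E} {c : X → ℝ} {A : X → E →L[ℂ] E}
    (hm : ∀ x, (m x).IsPositive) (hmint : Integrable m ν) (hPOVM : ∫ x, m x ∂ν = 1)
    (hR : ∀ x, ((c x : ℂ) • ρ - S - A x).IsPositive)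
    (hAint : Integrable (fun x => (LinearMap.trace ℂ E (A x ∘L m x)).re) ν)
    (hcint : Integrable (fun x => c x * (LinearMap.trace ℂ E (m x ∘L ρ)).re) ν) :
    (LinearMap.trace ℂ E S).re + ∫ x, (LinearMap.trace ℂ E (A x ∘L m x)).re ∂ν ≤
      ∫ x, c x * (LinearMap.trace ℂ E (m x ∘L ρ)).re ∂ν := by
  have hS : ∫ x, (LinearMap.trace ℂ E (m x ∘L S)).re ∂ν = (LinearMap.trace ℂ E S).re := by
    rw [integral_re_trace_comp hmint, hPOVM, one_def, id_comp]
  rw [← hS, ← integral_add (integrable_re_trace_comp hmint S) hAint]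
  exact integral_mono ((integrable_re_trace_comp hmint S).add hAint) hcint
    fun x => re_trace_comp_add_le_of_isPositive (hm x) (hR x)

end ContinuousLinearMap

theorem stmt15_general (d : ℕ)
    (ρ : EuclideanSpace ℂ (Fin d) →L[ℂ] EuclideanSpace ℂ (Fin d))
    (T : Type*) [NormedAddCommGroup T] [NormedSpace ℝ T]
    [MeasurableSpace T]
    (ι : T →L[ℝ] EuclideanSpace ℂ (Fin d) →L[ℂ] EuclideanSpace ℂ (Fin d))
    (g : T →ₗ[ℝ] T →ₗ[ℝ] ℝ)
    -- the measurement `M(dx) = m x ν(dx)`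
    (ν : Measure T)
    (m : T → EuclideanSpace ℂ (Fin d) →L[ℂ] EuclideanSpace ℂ (Fin d))
    (hm : ∀ x, (m x).IsPositive) (hmint : Integrable m ν)
    (hPOVM : ∫ x, m x ∂ν = 1)
    -- local unbiasedness
    (hubint : ∀ a : T →ₗ[ℝ] T,
      Integrable (fun x => (clmTrace (ι (a x) ∘L m x)).re) ν)
    (hub : ∀ a : T →ₗ[ℝ] T,
      ∫ x, (clmTrace (ι (a x) ∘L m x)).re ∂ν = LinearMap.trace ℝ T a)
    -- the Lagrange multiplier pair `(a, S)`
    (a : T →ₗ[ℝ] T)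
    (S : EuclideanSpace ℂ (Fin d) →L[ℂ] EuclideanSpace ℂ (Fin d))
    (hR : ∀ x : T, ((g x x : ℂ) • ρ - S - ι (a x)).IsPositive)
    (hdevint : Integrable (fun x => g x x * (clmTrace (m x ∘L ρ)).re) ν) :
    LinearMap.trace ℝ T a + (clmTrace S).re ≤
      ∫ x, g x x * (clmTrace (m x ∘L ρ)).re ∂ν := by
  rw [← hub a, add_comm]
  exact ContinuousLinearMap.re_trace_add_integral_le hm hmint hPOVM hR (hubint a) hdevint

/-- weak duality for the Cramér–Rao dual problem: `ρ` a density
matrix on the finite-dimensional `H`, `T` a subspace of traceless self-adjoint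
operators (realized by the embedding `ι`), `g` a positive quadratic form on `T`.
A POVM `M` on `T` is encoded by its density: `M(dx) = m x ν(dx)` with `m x ≥ 0`
and `∫ m dν = Id`.  If `M` is locally unbiased
(`∫ x tr(M(dx)ρ) = 0` and `∫ tr(a(x) M(dx)) = tr a` for all `a ∈ End T`) and
`(a, S)` satisfies `g(x,x)ρ − S − a(x) ≥ 0` for all `x ∈ T`, then
`∫ g(x,x) tr(M(dx)ρ) ≥ tr_T a + tr_H S`. -/
theorem stmt15 (d : ℕ)
    (ρ : EuclideanSpace ℂ (Fin d) →L[ℂ] EuclideanSpace ℂ (Fin d))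
    (hρpos : ρ.IsPositive) (hρtr : clmTrace ρ = 1)
    (T : Type*) [NormedAddCommGroup T] [NormedSpace ℝ T] [FiniteDimensional ℝ T]
    [MeasurableSpace T] [BorelSpace T]
    (ι : T →L[ℝ] EuclideanSpace ℂ (Fin d) →L[ℂ] EuclideanSpace ℂ (Fin d))
    (hι : Function.Injective ι)
    (hTsa : ∀ x : T, IsSelfAdjoint (ι x))
    (hTtr : ∀ x : T, clmTrace (ι x) = 0)
    (g : T →ₗ[ℝ] T →ₗ[ℝ] ℝ) (hgsymm : ∀ x y, g x y = g y x)
    (hgpos : ∀ x : T, x ≠ 0 → 0 < g x x)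
    -- the measurement `M(dx) = m x ν(dx)`
    (ν : Measure T)
    (m : T → EuclideanSpace ℂ (Fin d) →L[ℂ] EuclideanSpace ℂ (Fin d))
    (hm : ∀ x, (m x).IsPositive) (hmint : Integrable m ν)
    (hPOVM : ∫ x, m x ∂ν = 1)
    -- local unbiasedness
    (hmeanint : Integrable (fun x => (clmTrace (m x ∘L ρ)).re • x) ν)
    (hmean : ∫ x, (clmTrace (m x ∘L ρ)).re • x ∂ν = 0)
    (hubint : ∀ a : T →ₗ[ℝ] T,
      Integrable (fun x => (clmTrace (ι (a x) ∘L m x)).re) ν)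
    (hub : ∀ a : T →ₗ[ℝ] T,
      ∫ x, (clmTrace (ι (a x) ∘L m x)).re ∂ν = LinearMap.trace ℝ T a)
    -- the Lagrange multiplier pair `(a, S)`
    (a : T →ₗ[ℝ] T)
    (S : EuclideanSpace ℂ (Fin d) →L[ℂ] EuclideanSpace ℂ (Fin d))
    (hS : IsSelfAdjoint S)
    (hR : ∀ x : T, ((g x x : ℂ) • ρ - S - ι (a x)).IsPositive)
    (hdevint : Integrable (fun x => g x x * (clmTrace (m x ∘L ρ)).re) ν) :
    LinearMap.trace ℝ T a + (clmTrace S).re ≤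
      ∫ x, g x x * (clmTrace (m x ∘L ρ)).re ∂ν :=
  stmt15_general d ρ T ι g ν m hm hmint hPOVM hubint hub a S hR hdevint

end
end

section
/- Let ρ be a density matrix on H, T a subspace of self-adjoint operators, M a locally unbiased measurement at ρ, and x ∈ T. Define shifted measurements M∘S_x and M∘S_{−x} by translating outcomes by ±x, and let M_x := (1/2)(M∘S_x + M∘S_{−x}). Then M_x is locally unbiased and its covariance matrix satisfies V(M_x) = V(M) + x⊗x; consequently the set of covariance matrices of locally unbiased measurements is stable under adding rank-one positive symmetric tensors x⊗x. -/
/-! Translating the outcomes by `±x` leaves the POVM elements unchanged, and the two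
translations cancel pointwise in every integrand that is affine in the outcome (the mean and
the local-unbiasedness functionals). In the covariance integrand, which is quadratic in the
outcome, the cross terms cancel pointwise as well and leave `x ⊗ x` weighted by
`tr ρ = 1`. -/

open MeasureTheory
open scoped ENNReal

noncomputable section

theorem measurableEmbedding_inl {α β : Type*} [MeasurableSpace α] [MeasurableSpace β] :
    MeasurableEmbedding (@Sum.inl α β) :=
  ⟨Sum.inl_injective, measurable_inl, fun _ hs => hs.inl_image⟩

theorem measurableEmbedding_inr {α β : Type*} [MeasurableSpace α] [MeasurableSpace β] :
    MeasurableEmbedding (@Sum.inr α β) :=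
  ⟨Sum.inr_injective, measurable_inr, fun _ hs => hs.inr_image⟩

section SymmetrizedMeasure

variable {Ω E : Type*} [MeasurableSpace Ω] {ν : Measure Ω}
  [NormedAddCommGroup E] [NormedSpace ℝ E]

theorem integral_half_smul_map_inl_add_map_inr {g : Ω ⊕ Ω → E} {h : Ω → E}
    (hinl : Integrable (fun w => g (Sum.inl w)) ν) (hinr : Integrable (fun w => g (Sum.inr w)) ν)
    (hg : ∀ w, g (Sum.inl w) + g (Sum.inr w) = (2 : ℝ) • h w) :
    ∫ ω, g ω ∂((1 / 2 : ℝ≥0∞) • (ν.map Sum.inl + ν.map Sum.inr)) = ∫ w, h w ∂ν := by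
  rw [integral_smul_measure,
    integral_add_measure (measurableEmbedding_inl.integrable_map_iff.mpr hinl)
      (measurableEmbedding_inr.integrable_map_iff.mpr hinr),
    measurableEmbedding_inl.integral_map, measurableEmbedding_inr.integral_map,
    ← integral_add hinl hinr]
  simp only [hg, integral_smul, smul_smul]
  norm_num

end SymmetrizedMeasure

section Trace

variable {d : ℕ}

local notation "𝓗" => EuclideanSpace ℂ (Fin d)

theorem clmTrace_comp_comm (A B : 𝓗 →L[ℂ] 𝓗) : clmTrace (A ∘L B) = clmTrace (B ∘L A) :=
  LinearMap.trace_comp_comm' _ _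

def reTraceCompRight (B : 𝓗 →L[ℂ] 𝓗) : (𝓗 →L[ℂ] 𝓗) →L[ℝ] ℝ :=
  LinearMap.toContinuousLinearMap
    { toFun := fun A => (clmTrace (A ∘L B)).re
      map_add' := fun A₁ A₂ => by simp [clmTrace, ContinuousLinearMap.add_comp]
      map_smul' := fun r A => by
        simp [clmTrace, ContinuousLinearMap.smul_comp, LinearMap.map_smul_of_tower] }

theorem reTraceCompRight_apply (A B : 𝓗 →L[ℂ] 𝓗) :
    reTraceCompRight B A = (clmTrace (A ∘L B)).re :=
  rfl

variable {Ω : Type*} [MeasurableSpace Ω] {ν : Measure Ω}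
  {m : Ω → EuclideanSpace ℂ (Fin d) →L[ℂ] EuclideanSpace ℂ (Fin d)}

theorem integrable_re_clmTrace_comp_const (hm : Integrable m ν) (B : 𝓗 →L[ℂ] 𝓗) :
    Integrable (fun w => (clmTrace (m w ∘L B)).re) ν :=
  (reTraceCompRight B).integrable_comp hm

theorem integrable_re_clmTrace_const_comp (hm : Integrable m ν) (B : 𝓗 →L[ℂ] 𝓗) :
    Integrable (fun w => (clmTrace (B ∘L m w)).re) ν := by
  simpa only [clmTrace_comp_comm B] using integrable_re_clmTrace_comp_const hm B

theorem integral_re_clmTrace_comp_const (hm : Integrable m ν) (B : 𝓗 →L[ℂ] 𝓗) :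
    ∫ w, (clmTrace (m w ∘L B)).re ∂ν = (clmTrace ((∫ w, m w ∂ν) ∘L B)).re :=
  (reTraceCompRight B).integral_comp_comm hm

theorem integrable_re_clmTrace_apply_add_comp {T : Type*} [AddCommGroup T] [Module ℝ T]
    (A : T →ₗ[ℝ] 𝓗 →L[ℂ] 𝓗) {o : Ω → T} (hm : Integrable m ν)
    (hA : Integrable (fun w => (clmTrace (A (o w) ∘L m w)).re) ν) (x : T) :
    Integrable (fun w => (clmTrace (A (o w + x) ∘L m w)).re) ν := by
  simp_rw [← reTraceCompRight_apply, map_add] at hA ⊢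
  exact hA.add (integrable_re_clmTrace_const_comp hm (A x))

end Trace

section Moments

variable {Ω T : Type*} [MeasurableSpace Ω] {ν : Measure Ω}
  [NormedAddCommGroup T] [NormedSpace ℝ T] {c : Ω → ℝ} {o : Ω → T}

theorem MeasureTheory.Integrable.smul_add_const (hc : Integrable c ν)
    (hco : Integrable (fun w => c w • o w) ν) (x : T) :
    Integrable (fun w => c w • (o w + x)) ν := by
  simp_rw [smul_add]
  exact hco.add (hc.smul_const x)

theorem MeasureTheory.Integrable.mul_apply_of_smul [FiniteDimensional ℝ T]
    (hco : Integrable (fun w => c w • o w) ν) (f : T →ₗ[ℝ] ℝ) :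
    Integrable (fun w => c w * f (o w)) ν := by
  simpa using (LinearMap.toContinuousLinearMap f).integrable_comp hco

theorem MeasureTheory.Integrable.mul_apply_add_mul_apply_add [FiniteDimensional ℝ T]
    (hc : Integrable c ν) (hco : Integrable (fun w => c w • o w) ν) {f k : T →ₗ[ℝ] ℝ}
    (hcov : Integrable (fun w => c w * (f (o w) * k (o w))) ν) (x : T) :
    Integrable (fun w => c w * (f (o w + x) * k (o w + x))) ν := by
  refine (((hcov.add ((hco.mul_apply_of_smul f).const_mul (k x))).add
    ((hco.mul_apply_of_smul k).const_mul (f x))).add (hc.const_mul (f x * k x))).congr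
    (ae_of_all _ fun w => ?_)
  simp only [Pi.add_apply, map_add]
  ring

end Moments

theorem stmt16_general (d : ℕ)
    (ρ : EuclideanSpace ℂ (Fin d) →L[ℂ] EuclideanSpace ℂ (Fin d)) (hρtr : clmTrace ρ = 1)
    (T : Type*) [NormedAddCommGroup T] [NormedSpace ℝ T] [FiniteDimensional ℝ T]
    (ι : T →L[ℝ] EuclideanSpace ℂ (Fin d) →L[ℂ] EuclideanSpace ℂ (Fin d))
    {Ω : Type*} [MeasurableSpace Ω] (ν : Measure Ω)
    (m : Ω → EuclideanSpace ℂ (Fin d) →L[ℂ] EuclideanSpace ℂ (Fin d))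
    (o : Ω → T) (hmint : Integrable m ν)
    (hPOVM : ∫ ω, m ω ∂ν = 1)
    (hmeanint : Integrable (fun ω => (clmTrace (m ω ∘L ρ)).re • o ω) ν)
    (hmean : ∫ ω, (clmTrace (m ω ∘L ρ)).re • o ω ∂ν = 0)
    (hubint : ∀ a : T →ₗ[ℝ] T,
      Integrable (fun ω => (clmTrace (ι (a (o ω)) ∘L m ω)).re) ν)
    (hub : ∀ a : T →ₗ[ℝ] T,
      ∫ ω, (clmTrace (ι (a (o ω)) ∘L m ω)).re ∂ν = LinearMap.trace ℝ T a)
    (hcovint : ∀ f k : T →ₗ[ℝ] ℝ,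
      Integrable (fun ω => (clmTrace (m ω ∘L ρ)).re * (f (o ω) * k (o ω))) ν)
    (x0 : T) :
    -- shifted measurement `M_{x₀}` on `Ω ⊕ Ω`
    (∫ ω, Sum.elim m m ω
        ∂((1 / 2 : ℝ≥0∞) • (ν.map Sum.inl + ν.map Sum.inr)) = 1) ∧
    (∫ ω, (clmTrace (Sum.elim m m ω ∘L ρ)).re •
          Sum.elim (fun w => o w + x0) (fun w => o w - x0) ω
        ∂((1 / 2 : ℝ≥0∞) • (ν.map Sum.inl + ν.map Sum.inr)) = 0) ∧
    (∀ a : T →ₗ[ℝ] T,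
      ∫ ω, (clmTrace
            (ι (a (Sum.elim (fun w => o w + x0) (fun w => o w - x0) ω)) ∘L
              Sum.elim m m ω)).re
        ∂((1 / 2 : ℝ≥0∞) • (ν.map Sum.inl + ν.map Sum.inr)) =
      LinearMap.trace ℝ T a) ∧
    (∀ f k : T →ₗ[ℝ] ℝ,
      ∫ ω, (clmTrace (Sum.elim m m ω ∘L ρ)).re *
          (f (Sum.elim (fun w => o w + x0) (fun w => o w - x0) ω) *
           k (Sum.elim (fun w => o w + x0) (fun w => o w - x0) ω))
        ∂((1 / 2 : ℝ≥0∞) • (ν.map Sum.inl + ν.map Sum.inr)) =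
      (∫ ω, (clmTrace (m ω ∘L ρ)).re * (f (o ω) * k (o ω)) ∂ν) +
        f x0 * k x0) := by
  have hc : Integrable (fun w => (clmTrace (m w ∘L ρ)).re) ν :=
    integrable_re_clmTrace_comp_const hmint ρ
  have hc_one : ∫ w, (clmTrace (m w ∘L ρ)).re ∂ν = 1 := by
    rw [integral_re_clmTrace_comp_const hmint, hPOVM, ContinuousLinearMap.one_def,
      ContinuousLinearMap.id_comp, hρtr, Complex.one_re]
  have hshift (y : T) := hc.smul_add_const hmeanint y
  refine ⟨?_, ?_, fun a => ?_, fun f k => ?_⟩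
  · exact (integral_half_smul_map_inl_add_map_inr hmint hmint
      fun w => (two_smul ℝ (m w)).symm).trans hPOVM
  · refine (integral_half_smul_map_inl_add_map_inr (hshift x0)
      (by simpa only [Sum.elim_inr, sub_eq_add_neg] using hshift (-x0)) fun w => ?_).trans hmean
    simp only [Sum.elim_inl, Sum.elim_inr]
    module
  · have hA : ∀ y, Integrable (fun w => (clmTrace (ι (a (o w + y)) ∘L m w)).re) ν :=
      integrable_re_clmTrace_apply_add_comp (ι.toLinearMap ∘ₗ a) hmint (hubint a)
    refine (integral_half_smul_map_inl_add_map_inr (hA x0)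
      (by simpa only [Sum.elim_inr, sub_eq_add_neg] using hA (-x0)) fun w => ?_).trans (hub a)
    simp only [Sum.elim_inl, Sum.elim_inr, ← reTraceCompRight_apply, map_add, map_sub]
    module
  · have hcov := hc.mul_apply_add_mul_apply_add hmeanint (hcovint f k)
    rw [integral_half_smul_map_inl_add_map_inr (hcov x0)
      (by simpa only [Sum.elim_inr, sub_eq_add_neg] using hcov (-x0))
      (h := fun w => (clmTrace (m w ∘L ρ)).re * (f (o w) * k (o w)) +
        f x0 * k x0 * (clmTrace (m w ∘L ρ)).re)
      fun w => by simp only [Sum.elim_inl, Sum.elim_inr, map_add, map_sub]; ring,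
      integral_add (hcovint f k) (hc.const_mul _), integral_const_mul, hc_one, mul_one]

/-- Let `ρ` be a density matrix on the finite-dimensional `H`,
`T` a subspace of self-adjoint operators (realized by the embedding `ι`), and
`M` a locally unbiased measurement at `ρ` with outcomes in `T`, encoded as a
POVM density `m` on an outcome space `Ω` with base measure `ν` and outcome map
`o : Ω → T`.  For `x₀ ∈ T`, the randomized measurement
`M_{x₀} = (1/2)(M ∘ S_{x₀} + M ∘ S_{−x₀})` — encoded on `Ω ⊕ Ω` with base
measure `(1/2)(ν.map inl + ν.map inr)`, density `Sum.elim m m` and outcome map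
`Sum.elim (o + x₀) (o − x₀)` — is again a locally unbiased measurement and its
covariance bilinear form satisfies `V(M_{x₀}) = V(M) + x₀ ⊗ x₀`. -/
theorem stmt16 (d : ℕ)
    (ρ : EuclideanSpace ℂ (Fin d) →L[ℂ] EuclideanSpace ℂ (Fin d))
    (hρpos : ρ.IsPositive) (hρtr : clmTrace ρ = 1)
    (T : Type*) [NormedAddCommGroup T] [NormedSpace ℝ T] [FiniteDimensional ℝ T]
    [MeasurableSpace T] [BorelSpace T]
    (ι : T →L[ℝ] EuclideanSpace ℂ (Fin d) →L[ℂ] EuclideanSpace ℂ (Fin d))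
    (hι : Function.Injective ι)
    (hTsa : ∀ x : T, IsSelfAdjoint (ι x))
    {Ω : Type*} [MeasurableSpace Ω] (ν : Measure Ω)
    (m : Ω → EuclideanSpace ℂ (Fin d) →L[ℂ] EuclideanSpace ℂ (Fin d))
    (o : Ω → T) (ho : Measurable o)
    (hm : ∀ ω, (m ω).IsPositive) (hmint : Integrable m ν)
    (hPOVM : ∫ ω, m ω ∂ν = 1)
    (hmeanint : Integrable (fun ω => (clmTrace (m ω ∘L ρ)).re • o ω) ν)
    (hmean : ∫ ω, (clmTrace (m ω ∘L ρ)).re • o ω ∂ν = 0)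
    (hubint : ∀ a : T →ₗ[ℝ] T,
      Integrable (fun ω => (clmTrace (ι (a (o ω)) ∘L m ω)).re) ν)
    (hub : ∀ a : T →ₗ[ℝ] T,
      ∫ ω, (clmTrace (ι (a (o ω)) ∘L m ω)).re ∂ν = LinearMap.trace ℝ T a)
    (hcovint : ∀ f k : T →ₗ[ℝ] ℝ,
      Integrable (fun ω => (clmTrace (m ω ∘L ρ)).re * (f (o ω) * k (o ω))) ν)
    (x0 : T) :
    -- shifted measurement `M_{x₀}` on `Ω ⊕ Ω`
    (∫ ω, Sum.elim m m ω
        ∂((1 / 2 : ℝ≥0∞) • (ν.map Sum.inl + ν.map Sum.inr)) = 1) ∧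
    (∫ ω, (clmTrace (Sum.elim m m ω ∘L ρ)).re •
          Sum.elim (fun w => o w + x0) (fun w => o w - x0) ω
        ∂((1 / 2 : ℝ≥0∞) • (ν.map Sum.inl + ν.map Sum.inr)) = 0) ∧
    (∀ a : T →ₗ[ℝ] T,
      ∫ ω, (clmTrace
            (ι (a (Sum.elim (fun w => o w + x0) (fun w => o w - x0) ω)) ∘L
              Sum.elim m m ω)).re
        ∂((1 / 2 : ℝ≥0∞) • (ν.map Sum.inl + ν.map Sum.inr)) =
      LinearMap.trace ℝ T a) ∧
    (∀ f k : T →ₗ[ℝ] ℝ,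
      ∫ ω, (clmTrace (Sum.elim m m ω ∘L ρ)).re *
          (f (Sum.elim (fun w => o w + x0) (fun w => o w - x0) ω) *
           k (Sum.elim (fun w => o w + x0) (fun w => o w - x0) ω))
        ∂((1 / 2 : ℝ≥0∞) • (ν.map Sum.inl + ν.map Sum.inr)) =
      (∫ ω, (clmTrace (m ω ∘L ρ)).re * (f (o ω) * k (o ω)) ∂ν) +
        f x0 * k x0) :=
  stmt16_general d ρ hρtr T ι ν m o hmint hPOVM hmeanint hmean hubint hub hcovint x0

end
end

section
/- Let T be a 2-dimensional real inner product space with inner product J. Then the set { W⁻¹J : W ∈ End(T) self-adjoint positive with respect to J, tr W = 1 } equals { J + XJ : X ∈ End(T), det X = 1 } (intersected with positive symmetric forms). -/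
open scoped InnerProductSpace

/-!
In dimension two `adj A = tr A • 1 - A`, so `det A • A⁻¹ = adj A` gives
`det A * tr A⁻¹ = tr A`, while `det (A - 1) = det A - tr A + 1`. Hence for `A = W⁻¹` the
normalisation `tr W = 1` is exactly `det (W⁻¹ - 1) = 1`, and the form `W⁻¹J` is `J + XJ` with
`X = W⁻¹ - 1`. Symmetry and positivity pass between `W` and `W⁻¹`.
-/

namespace Matrix

variable {R : Type*} [CommRing R]

theorem det_sub_one_fin_two (A : Matrix (Fin 2) (Fin 2) R) :
    (A - 1).det = A.det - A.trace + 1 := by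
  simp only [det_fin_two, trace_fin_two, sub_apply, one_apply_eq, one_apply_ne, ne_eq,
    Fin.reduceEq, not_false_eq_true]
  ring

theorem det_mul_trace_of_mul_eq_one_fin_two {A W : Matrix (Fin 2) (Fin 2) R} (h : W * A = 1) :
    A.det * W.trace = A.trace := by
  have hW : A.det • W = A.adjugate :=
    calc A.det • W = W * (A.det • 1) := by rw [mul_smul_comm, mul_one]
      _ = W * (A * A.adjugate) := by rw [mul_adjugate]
      _ = A.adjugate := by rw [← mul_assoc, h, one_mul]
  rw [← smul_eq_mul, ← trace_smul, hW, adjugate_fin_two, trace_fin_two, trace_fin_two]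
  simp only [of_apply, cons_val', cons_val_zero, cons_val_one, empty_val', cons_val_fin_one]
  ring

end Matrix

namespace LinearMap

variable {K V : Type*} [Field K] [AddCommGroup V] [Module K V]

theorem det_sub_one_of_finrank_eq_two (hdim : Module.finrank K V = 2) (A : Module.End K V) :
    LinearMap.det (A - 1) = LinearMap.det A - LinearMap.trace K V A + 1 := by
  have := Module.finite_of_finrank_eq_succ hdim
  let b := Module.finBasisOfFinrankEq K V hdim
  rw [← det_toMatrix b, ← det_toMatrix b, trace_eq_matrix_trace K b, map_sub, toMatrix_one,
    Matrix.det_sub_one_fin_two]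

theorem det_mul_trace_of_mul_eq_one_of_finrank_eq_two (hdim : Module.finrank K V = 2)
    {A W : Module.End K V} (h : W * A = 1) :
    LinearMap.det A * LinearMap.trace K V W = LinearMap.trace K V A := by
  have := Module.finite_of_finrank_eq_succ hdim
  let b := Module.finBasisOfFinrankEq K V hdim
  rw [← det_toMatrix b, trace_eq_matrix_trace K b, trace_eq_matrix_trace K b]
  apply Matrix.det_mul_trace_of_mul_eq_one_fin_two
  rw [← toMatrix_mul, h, toMatrix_one]

theorem trace_eq_one_iff_det_sub_one_eq_one (hdim : Module.finrank K V = 2)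
    {A W : Module.End K V} (h : W * A = 1) :
    LinearMap.trace K V W = 1 ↔ LinearMap.det (A - 1) = 1 := by
  have hdetA : LinearMap.det A ≠ 0 := by
    intro h0
    have := congrArg LinearMap.det h
    rw [Module.End.mul_eq_comp, det_comp, h0, mul_zero, Module.End.one_eq_id, det_id] at this
    exact zero_ne_one this
  rw [det_sub_one_of_finrank_eq_two hdim, ← det_mul_trace_of_mul_eq_one_of_finrank_eq_two hdim h,
    ← mul_right_inj' hdetA]
  constructor <;> intro h' <;> linear_combination -h'

end LinearMap

section InnerProduct

variable {E : Type*} [NormedAddCommGroup E] [InnerProductSpace ℝ E] {A B : Module.End ℝ E}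

theorem LinearMap.isSymmetric_of_mul_eq_one (hA : A.IsSymmetric) (h : A * B = 1) :
    B.IsSymmetric := by
  have hAB (u : E) : A (B u) = u := by rw [← Module.End.mul_apply, h, Module.End.one_apply]
  intro u v
  conv_lhs => rw [← hAB v]
  rw [← hA, hAB]

theorem inner_pos_of_mul_eq_one (hA : ∀ u, u ≠ 0 → 0 < ⟪A u, u⟫_ℝ) (h : A * B = 1) :
    ∀ u, u ≠ 0 → 0 < ⟪B u, u⟫_ℝ := by
  have hAB (u : E) : A (B u) = u := by rw [← Module.End.mul_apply, h, Module.End.one_apply]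
  intro u hu
  have hBu : B u ≠ 0 := fun h0 => hu (by rw [← hAB u, h0, map_zero])
  simpa only [hAB, real_inner_comm u] using hA (B u) hBu

theorem isUnit_of_inner_pos [FiniteDimensional ℝ E] (hA : ∀ u, u ≠ 0 → 0 < ⟪A u, u⟫_ℝ) :
    IsUnit A := by
  rw [LinearMap.isUnit_iff_ker_eq_bot, LinearMap.ker_eq_bot']
  intro u hu
  by_contra hne
  simpa [hu] using hA u hne

end InnerProduct

theorem stmt19_general {T : Type*} [NormedAddCommGroup T] [InnerProductSpace ℝ T]
    (hdim : Module.finrank ℝ T = 2) :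
    {B : T →ₗ[ℝ] T →ₗ[ℝ] ℝ | ∃ W : Module.End ℝ T,
        (∀ u v : T, ⟪W u, v⟫_ℝ = ⟪u, W v⟫_ℝ) ∧
        (∀ u : T, u ≠ 0 → 0 < ⟪W u, u⟫_ℝ) ∧
        LinearMap.trace ℝ T W = 1 ∧
        ∃ Winv : Module.End ℝ T, Winv * W = 1 ∧ W * Winv = 1 ∧
          ∀ u v : T, B u v = ⟪Winv u, v⟫_ℝ} =
    {B : T →ₗ[ℝ] T →ₗ[ℝ] ℝ |
        (∃ X : Module.End ℝ T, LinearMap.det X = 1 ∧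
          ∀ u v : T, B u v = ⟪u, v⟫_ℝ + ⟪X u, v⟫_ℝ) ∧
        (∀ u v : T, B u v = B v u) ∧
        (∀ u : T, u ≠ 0 → 0 < B u u)} := by
  have := Module.finite_of_finrank_eq_succ hdim
  ext B
  constructor
  · rintro ⟨W, hW, hWpos, htr, Winv, hWinvW, hWWinv, hB⟩
    refine ⟨⟨Winv - 1, (LinearMap.trace_eq_one_iff_det_sub_one_eq_one hdim hWWinv).1 htr,
      fun u v => ?_⟩, fun u v => ?_, fun u hu => ?_⟩
    · rw [hB, LinearMap.sub_apply, inner_sub_left, Module.End.one_apply]; ring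
    · rw [hB, hB, LinearMap.isSymmetric_of_mul_eq_one hW hWWinv, real_inner_comm]
    · exact hB u u ▸ inner_pos_of_mul_eq_one hWpos hWWinv u hu
  · rintro ⟨⟨X, hdet, hBX⟩, hBsymm, hBpos⟩
    set A : Module.End ℝ T := 1 + X
    have hB (u v : T) : B u v = ⟪A u, v⟫_ℝ := by
      rw [hBX, LinearMap.add_apply, inner_add_left, Module.End.one_apply]
    have hA : A.IsSymmetric := fun u v => by rw [← hB, hBsymm, hB, real_inner_comm]
    have hApos (u : T) (hu : u ≠ 0) : 0 < ⟪A u, u⟫_ℝ := hB u u ▸ hBpos u hu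
    obtain ⟨U, hU⟩ := isUnit_of_inner_pos hApos
    have hAW : A * ↑U⁻¹ = 1 := by rw [← hU, Units.mul_inv]
    have hWA : ↑U⁻¹ * A = 1 := by rw [← hU, Units.inv_mul]
    refine ⟨↑U⁻¹, LinearMap.isSymmetric_of_mul_eq_one hA hAW, inner_pos_of_mul_eq_one hApos hAW,
      (LinearMap.trace_eq_one_iff_det_sub_one_eq_one hdim hWA).2 (by rwa [add_sub_cancel_left]),
      A, hAW, hWA, hB⟩

/-- Let `T` be a 2-dimensional real inner product space with
inner product `J`.  Identifying symmetric bilinear forms on `T*` with bilinear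
forms `B` on `T` via `J`, the random limit
`{ W⁻¹J : W positive self-adjoint, tr W = 1 }` coincides with
`{ J + XJ : X ∈ End T, det X = 1 }` intersected with the positive symmetric
forms. -/
theorem stmt19 {T : Type*} [NormedAddCommGroup T] [InnerProductSpace ℝ T]
    [FiniteDimensional ℝ T] (hdim : Module.finrank ℝ T = 2) :
    {B : T →ₗ[ℝ] T →ₗ[ℝ] ℝ | ∃ W : Module.End ℝ T,
        (∀ u v : T, ⟪W u, v⟫_ℝ = ⟪u, W v⟫_ℝ) ∧
        (∀ u : T, u ≠ 0 → 0 < ⟪W u, u⟫_ℝ) ∧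
        LinearMap.trace ℝ T W = 1 ∧
        ∃ Winv : Module.End ℝ T, Winv * W = 1 ∧ W * Winv = 1 ∧
          ∀ u v : T, B u v = ⟪Winv u, v⟫_ℝ} =
    {B : T →ₗ[ℝ] T →ₗ[ℝ] ℝ |
        (∃ X : Module.End ℝ T, LinearMap.det X = 1 ∧
          ∀ u v : T, B u v = ⟪u, v⟫_ℝ + ⟪X u, v⟫_ℝ) ∧
        (∀ u v : T, B u v = B v u) ∧
        (∀ u : T, u ≠ 0 → 0 < B u u)} :=
  stmt19_general hdim
end
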